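/- arXiv:2508.07191 — 14 statements merged into one kernel-verified Lean document; each statement's English description precedes it below -/
import Mathlib

section
/- Let φ : A → B be a Jordan homomorphism between associative algebras over a field with char ≠ 2, let u, v ∈ A, and set a = φ(uv) − φ(u)φ(v), b = φ(uv) − φ(v)φ(u). Then ab = ba = 0. -/
theorem jordan_hom_ab_eq_zero (F A B : Type*) [Field F] [Ring A] [Algebra F A]
    [Ring B] [Algebra F B] (hchar : (2 : F) ≠ 0)
    (φ : A →ₗ[F] B)
    (hJ : ∀ x y : A, φ (x * y + y * x) = φ x * φ y + φ y * φ x)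
    (u v : A)
    (a b : B) (ha : a = φ (u * v) - φ u * φ v) (hb : b = φ (u * v) - φ v * φ u) :
    a * b = 0 ∧ b * a = 0 := by
  have h2 : ∀ z w : B, z + z = w + w → z = w := by
    intro z w h
    have h' : (2 : F) • z = (2 : F) • w := by rw [two_smul, two_smul]; exact h
    exact smul_right_injective B hchar h'
  have sq : ∀ x : A, φ (x * x) = φ x * φ x := by
    intro x
    have h := hJ x x
    rw [map_add] at h
    exact h2 _ _ h
  have hxyx : ∀ x y : A, φ (x * y * x) = φ x * φ y * φ x := by
    intro x y
    have h1 := hJ x (x * y + y * x)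
    have harg : x * (x * y + y * x) + (x * y + y * x) * x
        = (x * x * y + y * (x * x)) + (x * y * x + x * y * x) := by noncomm_ring
    rw [harg, map_add, hJ (x * x) y, sq x, map_add, hJ x y] at h1
    apply h2
    have hS : φ (x * y * x) + φ (x * y * x)
        = (φ x * (φ x * φ y + φ y * φ x) + (φ x * φ y + φ y * φ x) * φ x)
          - (φ x * φ x * φ y + φ y * (φ x * φ x)) := by
      rw [← h1]; abel
    rw [hS]; noncomm_ring
  have hxyz : ∀ x y z : A, φ (x * y * z + z * y * x)
      = φ x * φ y * φ z + φ z * φ y * φ x := by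
    intro x y z
    have h := hxyx (x + z) y
    have harg : (x + z) * y * (x + z)
        = x * y * x + (x * y * z + z * y * x) + z * y * z := by noncomm_ring
    rw [harg, map_add, map_add, hxyx x y, hxyx z y, map_add, map_add] at h
    have hS : φ (x * y * z) + φ (z * y * x)
        = (φ x + φ z) * φ y * (φ x + φ z) - φ x * φ y * φ x - φ z * φ y * φ z := by
      rw [← h]; abel
    rw [map_add, hS]; noncomm_ring
  subst ha hb
  have e1 := sq (u * v)
  constructor
  · have e2 := hxyz (u * v) v u
    have key : (u * v) * v * u = u * (v * v) * u := by noncomm_ring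
    rw [key, map_add] at e2
    have e3 := hxyx u (v * v)
    have expand : (φ (u * v) - φ u * φ v) * (φ (u * v) - φ v * φ u)
        = φ (u * v) * φ (u * v)
          - (φ (u * v) * φ v * φ u + φ u * φ v * φ (u * v))
          + φ u * (φ v * φ v) * φ u := by noncomm_ring
    rw [sq v] at e3
    rw [expand, ← e1, ← e2, ← e3]
    abel
  · have e2 := hxyz (u * v) u v
    have key : v * u * (u * v) = v * (u * u) * v := by noncomm_ring
    rw [key, map_add] at e2
    have e3 := hxyx v (u * u)
    rw [sq u] at e3
    have key2 : (u * v) * u * v = (u * v) * (u * v) := by noncomm_ring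
    rw [key2] at e2
    have expand : (φ (u * v) - φ v * φ u) * (φ (u * v) - φ u * φ v)
        = φ (u * v) * φ (u * v)
          - (φ (u * v) * φ u * φ v + φ v * φ u * φ (u * v))
          + φ v * (φ u * φ u) * φ v := by noncomm_ring
    rw [expand, ← e1, ← e2, ← e3]
    abel
end

section
/- Let φ : A → B be a Jordan homomorphism between associative algebras over a field with char ≠ 2, let u, v ∈ A, and set a = φ(uv) − φ(u)φ(v), b = φ(uv) − φ(v)φ(u). Then a φ(x) b + b φ(x) a = 0 for every x ∈ A. -/
theorem jordan_hom_axb_bxa (F A B : Type*) [Field F] [Ring A] [Algebra F A]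
    [Ring B] [Algebra F B] (hchar : (2 : F) ≠ 0)
    (φ : A →ₗ[F] B)
    (hJ : ∀ x y : A, φ (x * y + y * x) = φ x * φ y + φ y * φ x)
    (u v : A)
    (a b : B) (ha : a = φ (u * v) - φ u * φ v) (hb : b = φ (u * v) - φ v * φ u) :
    ∀ x : A, a * φ x * b + b * φ x * a = 0 := by
  have two_cancel : ∀ s t : B, s + s = t + t → s = t := by
    intro s t h
    have h2 : (2:F) • s = (2:F) • t := by rw [two_smul, two_smul]; exact h
    exact smul_right_injective B hchar h2
  have hsq : ∀ x : A, φ (x * x) = φ x * φ x := by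
    intro x
    apply two_cancel
    have := hJ x x
    rw [map_add] at this
    exact this
  have L1 : ∀ x y : A, φ (x * y * x) = φ x * φ y * φ x := by
    intro x y
    apply two_cancel
    have h1 := hJ x (x * y + y * x)
    have harg : x * (x * y + y * x) + (x * y + y * x) * x
        = (x * x * y + y * (x * x)) + (x * y * x + x * y * x) := by noncomm_ring
    rw [harg, map_add, hJ (x*x) y, hsq, hJ x y, map_add] at h1
    linear_combination (norm := noncomm_ring) h1
  have L2 : ∀ x y z : A, φ (x * y * z + z * y * x)
      = φ x * φ y * φ z + φ z * φ y * φ x := by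
    intro x y z
    have h1 := L1 (x + z) y
    have harg : (x + z) * y * (x + z)
        = x * y * x + (z * y * z + (x * y * z + z * y * x)) := by noncomm_ring
    rw [harg] at h1
    simp only [map_add] at h1 ⊢
    rw [L1 x y, L1 z y] at h1
    linear_combination (norm := noncomm_ring) h1
  intro x
  set P := φ (u * v) with hP
  set U := φ u with hU
  set V := φ v with hV
  set X := φ x with hX
  have hvu : φ (v * u) = U * V + V * U - P := by
    have := hJ u v
    rw [map_add] at this
    linear_combination (norm := noncomm_ring) this
  have key : φ (u * v * x * (v * u)) + φ (v * u * x * (u * v))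
      = U * V * X * (V * U) + V * U * X * (U * V) := by
    have e1 : u * v * x * (v * u) = u * (v * x * v) * u := by noncomm_ring
    have e2 : v * u * x * (u * v) = v * (u * x * u) * v := by noncomm_ring
    rw [e1, e2, L1, L1, L1, L1]
    simp only [← hU, ← hV, ← hX]
    noncomm_ring
  have key2 : P * X * (U * V + V * U - P) + (U * V + V * U - P) * X * P
      = U * V * X * (V * U) + V * U * X * (U * V) := by
    have h2 := L2 (u * v) x (v * u)
    rw [map_add, key, hvu] at h2
    linear_combination (norm := noncomm_ring) -h2
  subst ha hb
  linear_combination (norm := noncomm_ring) -key2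
end

section
/- Let φ : A → B be a Jordan homomorphism between associative algebras over a field with char ≠ 2. Then for every w, y ∈ A and every m ∈ ℕ, φ(∑_{i=0}^{m} yⁱ w y^{m−i}) = ∑_{i=0}^{m} φ(y)ⁱ φ(w) φ(y)^{m−i}. -/
private lemma two_cancel_aux {F B : Type*} [Field F] [Ring B] [Algebra F B]
    (hchar : (2 : F) ≠ 0) {a b : B} (h : a + a = b + b) : a = b := by
  have h2 : (2 : F) • a = (2 : F) • b := by
    rw [two_smul, two_smul]; exact h
  exact smul_right_injective B hchar h2

private lemma sum_rec_aux {R : Type*} [Ring R] (b w : R) (m : ℕ) :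
    (∑ i ∈ Finset.range (m + 2), b ^ i * w * b ^ (m + 1 - i)) +
      (∑ i ∈ Finset.range (m + 2), b ^ i * w * b ^ (m + 1 - i)) =
    (b * (∑ i ∈ Finset.range (m + 1), b ^ i * w * b ^ (m - i)) +
       (∑ i ∈ Finset.range (m + 1), b ^ i * w * b ^ (m - i)) * b) +
      (w * b ^ (m + 1) + b ^ (m + 1) * w) := by
  have h1 : (∑ i ∈ Finset.range (m + 2), b ^ i * w * b ^ (m + 1 - i)) =
      b * (∑ i ∈ Finset.range (m + 1), b ^ i * w * b ^ (m - i)) + w * b ^ (m + 1) := by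
    rw [Finset.sum_range_succ', Finset.mul_sum]
    simp [pow_succ', Nat.succ_sub_succ, mul_assoc]
  have h2 : (∑ i ∈ Finset.range (m + 2), b ^ i * w * b ^ (m + 1 - i)) =
      (∑ i ∈ Finset.range (m + 1), b ^ i * w * b ^ (m - i)) * b + b ^ (m + 1) * w := by
    rw [Finset.sum_range_succ, Finset.sum_mul]
    simp only [Nat.sub_self, pow_zero, mul_one]
    congr 1
    refine Finset.sum_congr rfl fun i hi => ?_
    have hi' : i ≤ m := Nat.lt_succ_iff.mp (Finset.mem_range.mp hi)
    have : m + 1 - i = (m - i) + 1 := by omega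
    rw [this, pow_succ, ← mul_assoc]
  nth_rewrite 1 [h1]
  nth_rewrite 1 [h2]
  abel

private lemma pow_aux {F A B : Type*} [Field F] [Ring A] [Algebra F A]
    [Ring B] [Algebra F B] (hchar : (2 : F) ≠ 0)
    (φ : A →ₗ[F] B)
    (hJ : ∀ x y : A, φ (x * y + y * x) = φ x * φ y + φ y * φ x)
    (y : A) : ∀ n : ℕ, φ (y ^ (n + 1)) = (φ y) ^ (n + 1) := by
  intro n
  induction n with
  | zero => simp
  | succ k ih =>
    have h := hJ (y ^ (k + 1)) y
    have hl : y ^ (k + 1) * y + y * y ^ (k + 1) = y ^ (k + 2) + y ^ (k + 2) := by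
      rw [← pow_succ, ← pow_succ']
    rw [hl, map_add, ih] at h
    have hr : (φ y) ^ (k + 1) * φ y + φ y * (φ y) ^ (k + 1) =
        (φ y) ^ (k + 2) + (φ y) ^ (k + 2) := by
      rw [← pow_succ, ← pow_succ']
    rw [hr] at h
    exact two_cancel_aux hchar h

theorem jordan_hom_power_sum (F A B : Type*) [Field F] [Ring A] [Algebra F A]
    [Ring B] [Algebra F B] (hchar : (2 : F) ≠ 0)
    (φ : A →ₗ[F] B)
    (hJ : ∀ x y : A, φ (x * y + y * x) = φ x * φ y + φ y * φ x) :
    ∀ (w y : A) (m : ℕ),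
      φ (∑ i ∈ Finset.range (m + 1), y ^ i * w * y ^ (m - i)) =
        ∑ i ∈ Finset.range (m + 1), (φ y) ^ i * φ w * (φ y) ^ (m - i) := by
  intro w y m
  induction m with
  | zero => simp
  | succ k ih =>
    have hA := sum_rec_aux y w k
    have hB := sum_rec_aux (φ y) (φ w) k
    have key : φ (∑ i ∈ Finset.range (k + 2), y ^ i * w * y ^ (k + 1 - i)) +
        φ (∑ i ∈ Finset.range (k + 2), y ^ i * w * y ^ (k + 1 - i)) =
        (∑ i ∈ Finset.range (k + 2), (φ y) ^ i * φ w * (φ y) ^ (k + 1 - i)) +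
        (∑ i ∈ Finset.range (k + 2), (φ y) ^ i * φ w * (φ y) ^ (k + 1 - i)) := by
      rw [← map_add, hA, map_add, hB, hJ, hJ, ih, pow_aux hchar φ hJ y k]
    exact two_cancel_aux hchar key
end

section
/- Let φ : A → B be a Jordan homomorphism between associative algebras over a field with char ≠ 2. Let u, v ∈ A, y = [u,v], and ỹ = [φ(u), φ(v)]. Then for all x ∈ A and all natural numbers n with n ≠ 2, φ([x, yⁿ]) = [φ(x), φ(y)^{n−1} ỹ]. -/
theorem jordan_hom_commutator_power (F A B : Type*) [Field F] [Ring A] [Algebra F A]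
    [Ring B] [Algebra F B] (hchar : (2 : F) ≠ 0)
    (φ : A →ₗ[F] B)
    (hJ : ∀ x y : A, φ (x * y + y * x) = φ x * φ y + φ y * φ x)
    (u v : A) (y : A) (hy : y = u * v - v * u)
    (ytil : B) (hytil : ytil = φ u * φ v - φ v * φ u) :
    ∀ (x : A) (n : ℕ), 1 ≤ n → n ≠ 2 →
      φ (x * y ^ n - y ^ n * x) =
        φ x * ((φ y) ^ (n - 1) * ytil) - ((φ y) ^ (n - 1) * ytil) * φ x := by
  -- halving
  have half : ∀ z w : B, z + z = w + w → z = w := by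
    intro z w h
    have h2 : (2:F) • z = (2:F) • w := by rw [two_smul, two_smul]; exact h
    calc z = (2:F)⁻¹ • ((2:F) • z) := (inv_smul_smul₀ hchar z).symm
      _ = (2:F)⁻¹ • ((2:F) • w) := by rw [h2]
      _ = w := inv_smul_smul₀ hchar w
  -- squares
  have sq : ∀ s : A, φ (s*s) = φ s * φ s := by
    intro s
    have h := hJ s s
    rw [show s*s + s*s = s*s + s*s from rfl] at h
    rw [map_add] at h
    exact half _ _ (by rw [h])
  -- Jordan triple
  have triple : ∀ s z : A, φ (s*z*s) = φ s * φ z * φ s := by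
    intro s z
    have h1 : (s*z*s) + (s*z*s) = (s*(s*z+z*s) + (s*z+z*s)*s) - ((s*s)*z + z*(s*s)) := by
      noncomm_ring
    have h2 := congrArg φ h1
    rw [map_add, map_sub, hJ s (s*z+z*s), hJ s z, hJ (s*s) z, sq s] at h2
    refine half _ _ (h2.trans ?_)
    noncomm_ring
  -- linearized Jordan triple
  have triple2 : ∀ s z w : A, φ (s*z*w + w*z*s) = φ s * φ z * φ w + φ w * φ z * φ s := by
    intro s z w
    have h1 : s*z*w + w*z*s = (s+w)*z*(s+w) - s*z*s - w*z*w := by noncomm_ring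
    rw [h1, map_sub, map_sub, triple, triple, triple, map_add]
    noncomm_ring
  -- φ(v*u)
  have hq : φ (v*u) = φ u * φ v + φ v * φ u - φ (u*v) := by
    have h := hJ u v
    rw [map_add] at h
    exact eq_sub_of_add_eq' h
  -- definitions of a and b
  obtain ⟨a, ha⟩ : ∃ a, a = φ (u*v) - φ u * φ v := ⟨_, rfl⟩
  obtain ⟨b, hb⟩ : ∃ b, b = φ (u*v) - φ v * φ u := ⟨_, rfl⟩
  -- a*b = 0
  have hab : a * b = 0 := by
    have h1 : φ ((u*(v*v))*u + (u*v)*(u*v)) = φ (u*v) * φ v * φ u + φ u * φ v * φ (u*v) := by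
      have h0 : (u*(v*v))*u + (u*v)*(u*v) = (u*v)*v*u + u*(v*(u*v)) := by noncomm_ring
      rw [h0]
      have := triple2 (u*v) v u
      rw [show (u*v)*v*u + u*v*(u*v) = (u*v)*v*u + u*(v*(u*v)) from by noncomm_ring] at this
      exact this
    have h2 : φ ((u*(v*v))*u + (u*v)*(u*v)) = φ u * (φ v * φ v) * φ u + φ (u*v) * φ (u*v) := by
      rw [map_add, triple u (v*v), sq v, sq (u*v)]
    have h3 : φ (u*v) * φ v * φ u + φ u * φ v * φ (u*v)
        = φ u * (φ v * φ v) * φ u + φ (u*v) * φ (u*v) := h1.symm.trans h2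
    have h4 : a * b = (φ u * (φ v * φ v) * φ u + φ (u*v) * φ (u*v))
        - (φ (u*v) * φ v * φ u + φ u * φ v * φ (u*v)) := by
      rw [ha, hb]; noncomm_ring
    rw [h4, ← h3, sub_self]
  -- b*a = 0
  have hba : b * a = 0 := by
    have h1 : φ ((v*(u*u))*v + (u*v)*(u*v)) = φ (u*v) * φ u * φ v + φ v * φ u * φ (u*v) := by
      have h0 : (v*(u*u))*v + (u*v)*(u*v) = (u*v)*u*v + v*(u*(u*v)) := by noncomm_ring
      rw [h0]
      have := triple2 (u*v) u v
      rw [show (u*v)*u*v + v*u*(u*v) = (u*v)*u*v + v*(u*(u*v)) from by noncomm_ring] at this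
      exact this
    have h2 : φ ((v*(u*u))*v + (u*v)*(u*v)) = φ v * (φ u * φ u) * φ v + φ (u*v) * φ (u*v) := by
      rw [map_add, triple v (u*u), sq u, sq (u*v)]
    have h3 : φ (u*v) * φ u * φ v + φ v * φ u * φ (u*v)
        = φ v * (φ u * φ u) * φ v + φ (u*v) * φ (u*v) := h1.symm.trans h2
    have h4 : b * a = (φ v * (φ u * φ u) * φ v + φ (u*v) * φ (u*v))
        - (φ (u*v) * φ u * φ v + φ v * φ u * φ (u*v)) := by
      rw [ha, hb]; noncomm_ring
    rw [h4, ← h3, sub_self]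
  -- the key relation a φ(t) b + b φ(t) a = 0
  have L5 : ∀ t : A, a * φ t * b + b * φ t * a = 0 := by
    intro t
    have h1 : φ ((u*(v*t*v))*u + (v*(u*t*u))*v)
        = φ (u*v) * φ t * (φ u * φ v + φ v * φ u - φ (u*v))
          + (φ u * φ v + φ v * φ u - φ (u*v)) * φ t * φ (u*v) := by
      have h0 : (u*(v*t*v))*u + (v*(u*t*u))*v = (u*v)*t*(v*u) + (v*u)*t*(u*v) := by
        noncomm_ring
      rw [h0, triple2 (u*v) t (v*u), hq]
    have h2 : φ ((u*(v*t*v))*u + (v*(u*t*u))*v)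
        = φ u * (φ v * φ t * φ v) * φ u + φ v * (φ u * φ t * φ u) * φ v := by
      rw [map_add, triple u (v*t*v), triple v (u*t*u), triple v t, triple u t]
    have h3 := h1.symm.trans h2
    have h4 : a * φ t * b + b * φ t * a
        = (φ u * (φ v * φ t * φ v) * φ u + φ v * (φ u * φ t * φ u) * φ v)
          - (φ (u*v) * φ t * (φ u * φ v + φ v * φ u - φ (u*v))
             + (φ u * φ v + φ v * φ u - φ (u*v)) * φ t * φ (u*v)) := by
      rw [ha, hb]; noncomm_ring
    rw [h4, ← h3, sub_self]
  have hbda : ∀ t : A, b * φ t * a = -(a * φ t * b) := fun t =>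
    eq_neg_of_add_eq_zero_right (L5 t)
  -- power annihilation lemmas
  have hab1 : ∀ k : ℕ, a * b^(k+1) = 0 := by
    intro k; rw [pow_succ', ← mul_assoc, hab, zero_mul]
  have hab2 : ∀ k : ℕ, a^(k+1) * b = 0 := by
    intro k; rw [pow_succ, mul_assoc, hab, mul_zero]
  have hba1 : ∀ k : ℕ, b * a^(k+1) = 0 := by
    intro k; rw [pow_succ', ← mul_assoc, hba, zero_mul]
  have hba2 : ∀ k : ℕ, b^(k+1) * a = 0 := by
    intro k; rw [pow_succ, mul_assoc, hba, mul_zero]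
  have hbd1 : ∀ (t : A) (k : ℕ), b * φ t * a^(k+2) = 0 := by
    intro t k
    rw [pow_succ' a (k+1), ← mul_assoc, hbda t, neg_mul,
        mul_assoc (a * φ t) b, hba1 k, mul_zero, neg_zero]
  have hbd2 : ∀ (t : A) (k : ℕ), b^(k+2) * φ t * a = 0 := by
    intro t k
    rw [pow_succ b (k+1), mul_assoc (b^(k+1)) b (φ t), mul_assoc (b^(k+1)) (b * φ t) a,
        hbda t, mul_neg, ← mul_assoc, ← mul_assoc, hba2 k, zero_mul, zero_mul, neg_zero]
  -- φ(y) = a + b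
  have hyab : φ y = a + b := by
    rw [hy, map_sub, hq, ha, hb]; abel
  -- ytil = b - a
  have hyt : b - a = ytil := by
    rw [hytil, ha, hb]; abel
  -- φ(y^n) = a^n + b^n
  have hcn : ∀ k : ℕ, φ (y^(k+1)) = a^(k+1) + b^(k+1) := by
    intro k; induction k with
    | zero => simpa [pow_one] using hyab
    | succ k ih =>
      have hcomm : y^(k+1) * y = y * y^(k+1) := (pow_succ y (k+1)).symm.trans (pow_succ' y (k+1))
      have h1 : y^(k+2) + y^(k+2) = y * y^(k+1) + y^(k+1) * y := by
        rw [pow_succ y (k+1), hcomm]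
      have h2 := congrArg φ h1
      rw [map_add, hJ y (y^(k+1)), ih, hyab] at h2
      refine half _ _ (h2.trans ?_)
      have e1 : a * a^(k+1) = a^(k+2) := (pow_succ' a (k+1)).symm
      have e2 : b * b^(k+1) = b^(k+2) := (pow_succ' b (k+1)).symm
      have e3 : a^(k+1) * a = a^(k+2) := (pow_succ a (k+1)).symm
      have e4 : b^(k+1) * b = b^(k+2) := (pow_succ b (k+1)).symm
      have cert : (a+b) * (a^(k+1) + b^(k+1)) + (a^(k+1) + b^(k+1)) * (a+b)
          = (a * a^(k+1) + b * b^(k+1) + (a^(k+1) * a + b^(k+1) * b))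
            + (a * b^(k+1) + b * a^(k+1) + (a^(k+1) * b + b^(k+1) * a)) := by
        noncomm_ring
      rw [cert, hab1 k, hba1 k, hab2 k, hba2 k, e1, e2, e3, e4]
      abel
  -- the defect relation: a φ(t) b^(k+2) + a^(k+2) φ(t) b = 0
  have D : ∀ (t : A) (k : ℕ), a * φ t * b^(k+2) + a^(k+2) * φ t * b = 0 := by
    intro t k
    obtain ⟨A', hA⟩ : ∃ A', A' = a^(k+1) := ⟨_, rfl⟩
    obtain ⟨B', hB⟩ : ∃ B', B' = b^(k+1) := ⟨_, rfl⟩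
    have h0 := L5 (t * y^(k+1) + y^(k+1) * t)
    rw [hJ t (y^(k+1)), hcn k, ← hA, ← hB] at h0
    have cert : a * (φ t * (A' + B') + (A' + B') * φ t) * b
          + b * (φ t * (A' + B') + (A' + B') * φ t) * a
        = (a * φ t * (B' * b) + (a * A') * φ t * b)
          + (a * φ t * (A' * b) + (a * B') * (φ t * b)
             + b * φ t * (A' * a) + b * φ t * (B' * a)
             + (b * A') * (φ t * a) + (b * B') * φ t * a) := by
      noncomm_ring
    rw [cert] at h0
    rw [hA, hB] at h0
    rw [hab2 k, hab1 k, hba1 k, hba2 k] at h0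
    rw [show a^(k+1) * a = a^(k+2) from (pow_succ a (k+1)).symm,
        show b^(k+1) * b = b^(k+2) from (pow_succ b (k+1)).symm,
        show a * a^(k+1) = a^(k+2) from (pow_succ' a (k+1)).symm,
        show b * b^(k+1) = b^(k+2) from (pow_succ' b (k+1)).symm] at h0
    rw [hbd1 t k, hbd2 t k] at h0
    simpa using h0
  -- the n = 1 case
  have E1 : ∀ t : A, φ (t*y - y*t) = φ t * (b - a) - (b - a) * φ t := by
    intro t
    have h1 : t*y - y*t = (v*(u*t+t*u) + (u*t+t*u)*v) - (u*(v*t+t*v) + (v*t+t*v)*u) := by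
      rw [hy]; noncomm_ring
    rw [h1, map_sub, hJ v (u*t+t*u), hJ u t, hJ u (v*t+t*v), hJ v t, ha, hb]
    noncomm_ring
  -- commutator doubling identity
  have gen : ∀ t Y : A, y*Y = Y*y →
      (t*(y*Y) - (y*Y)*t) + (t*(y*Y) - (y*Y)*t)
        = ((t*y - y*t)*Y + Y*(t*y - y*t)) + ((t*Y - Y*t)*y + y*(t*Y - Y*t)) := by
    intro t Y hY
    have cert : (t*(y*Y) - (y*Y)*t) + (t*(y*Y) - (y*Y)*t)
        = (((t*y - y*t)*Y + Y*(t*y - y*t)) + ((t*Y - Y*t)*y + y*(t*Y - Y*t)))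
          + (t*(y*Y - Y*y) + (Y*y - y*Y)*t) := by noncomm_ring
    rw [cert, hY]
    simp
  -- main claim with defect
  have Sclaim : ∀ (m : ℕ) (t : A), φ (t*y^(m+1) - y^(m+1)*t)
      = φ t * (b^(m+1) - a^(m+1)) - (b^(m+1) - a^(m+1)) * φ t
        + (if m = 1 then (4:B) * (a * φ t * b) else 0) := by
    intro m
    induction m with
    | zero =>
      intro t
      simp only [Nat.reduceAdd, pow_one]
      rw [if_neg (by decide : ¬((0:ℕ) = 1)), add_zero]
      exact E1 t
    | succ m ih =>
      intro t
      have hYc : y * y^(m+1) = y^(m+1) * y :=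
        (pow_succ' y (m+1)).symm.trans (pow_succ y (m+1))
      have h1 : (t*y^(m+1+1) - y^(m+1+1)*t) + (t*y^(m+1+1) - y^(m+1+1)*t)
          = ((t*y - y*t)*y^(m+1) + y^(m+1)*(t*y - y*t))
            + ((t*y^(m+1) - y^(m+1)*t)*y + y*(t*y^(m+1) - y^(m+1)*t)) := by
        rw [pow_succ' y (m+1)]
        exact gen t (y^(m+1)) hYc
      have h2 := congrArg φ h1
      rw [map_add, map_add, hJ (t*y - y*t) (y^(m+1)), hJ (t*y^(m+1) - y^(m+1)*t) y,
          E1 t, hcn m, ih t, hyab] at h2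
      rcases eq_or_ne m 0 with rfl | hm0
      · -- the n = 2 case, with defect
        rw [if_neg (by decide : ¬((0:ℕ) = 1))] at h2
        simp only [Nat.reduceAdd, pow_one, reduceIte, add_zero] at h2 ⊢
        refine half _ _ (h2.trans ?_)
        rw [pow_two a, pow_two b]
        have cert : ((φ t*(b-a) - (b-a)*φ t)*(a+b) + (a+b)*(φ t*(b-a) - (b-a)*φ t))
              + ((φ t*(b-a) - (b-a)*φ t)*(a+b) + (a+b)*(φ t*(b-a) - (b-a)*φ t))
            = ((φ t*(b*b - a*a) - (b*b - a*a)*φ t + (4:B)*(a*φ t*b))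
                + (φ t*(b*b - a*a) - (b*b - a*a)*φ t + (4:B)*(a*φ t*b)))
              + ((2:B)*(φ t*(b*a) - φ t*(a*b) - a*b*φ t + b*a*φ t)
                 - (4:B)*(a*φ t*b + b*φ t*a)) := by noncomm_ring
        rw [cert, hab, hba, L5 t]
        noncomm_ring
      · -- the clean case
        obtain ⟨j, rfl⟩ : ∃ j, m = j + 1 := ⟨m - 1, by omega⟩
        rw [(by omega : j+1+1 = j+2)] at h2 ⊢
        rw [(by omega : j+2+1 = j+3)] at h2 ⊢
        -- split off the defect of the induction hypothesis
        have hsplit : ∀ δ' C : B, (C + δ')*(a+b) + (a+b)*(C + δ')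
            = (C*(a+b) + (a+b)*C) + (δ'*(a+b) + (a+b)*δ') := by
          intro δ' C; noncomm_ring
        rw [hsplit] at h2
        have hδ0 : (if j+1 = 1 then (4:B) * (a * φ t * b) else 0)*(a+b)
            + (a+b)*(if j+1 = 1 then (4:B) * (a * φ t * b) else 0) = 0 := by
          split_ifs with hje
          · have hD : a*φ t*(b*b) + a*a*φ t*b = 0 := by
              have hD0 := D t 0
              rw [(by omega : (0:ℕ)+2 = 2), pow_two a, pow_two b] at hD0
              exact hD0
            have cert : (4:B)*(a*φ t*b)*(a+b) + (a+b)*((4:B)*(a*φ t*b))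
                = (4:B)*(a*φ t*(b*b) + a*a*φ t*b)
                  + (4:B)*(a*φ t*(b*a) + b*a*φ t*b) := by noncomm_ring
            rw [cert, hD, hba]
            simp
          · simp
        rw [hδ0, add_zero] at h2
        -- abstract the powers
        obtain ⟨A', hA'⟩ : ∃ z, z = a^(j+2) := ⟨_, rfl⟩
        obtain ⟨B', hB'⟩ : ∃ z, z = b^(j+2) := ⟨_, rfl⟩
        obtain ⟨A2, hA2⟩ : ∃ z, z = a^(j+3) := ⟨_, rfl⟩
        obtain ⟨B2, hB2⟩ : ∃ z, z = b^(j+3) := ⟨_, rfl⟩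
        rw [← hA', ← hB'] at h2
        rw [if_neg (by omega : ¬(j+2 = 1)), add_zero, ← hA2, ← hB2]
        have rAb : A' * b = 0 := by rw [hA']; exact hab2 (j+1)
        have rbA : b * A' = 0 := by rw [hA']; exact hba1 (j+1)
        have raB : a * B' = 0 := by rw [hB']; exact hab1 (j+1)
        have rBa : B' * a = 0 := by rw [hB']; exact hba2 (j+1)
        have rbdA : b * φ t * A' = 0 := by rw [hA']; exact hbd1 t j
        have rBda : B' * φ t * a = 0 := by rw [hB']; exact hbd2 t j
        have rD : a * φ t * B' + A' * φ t * b = 0 := by rw [hA', hB']; exact D t j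
        have raA : a * A' = A2 := by rw [hA', hA2]; exact (pow_succ' a (j+2)).symm
        have rAa : A' * a = A2 := by rw [hA', hA2]; exact (pow_succ a (j+2)).symm
        have rbB : b * B' = B2 := by rw [hB', hB2]; exact (pow_succ' b (j+2)).symm
        have rBb : B' * b = B2 := by rw [hB', hB2]; exact (pow_succ b (j+2)).symm
        refine half _ _ (h2.trans ?_)
        have cert :
            ((φ t*(b-a) - (b-a)*φ t)*(A'+B') + (A'+B')*(φ t*(b-a) - (b-a)*φ t))
            + ((φ t*(B'-A') - (B'-A')*φ t)*(a+b) + (a+b)*(φ t*(B'-A') - (B'-A')*φ t))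
            = ((φ t*(b*B' - a*A') - (b*B' - a*A')*φ t)
                + (φ t*(B'*b - A'*a) - (B'*b - A'*a)*φ t))
              + ((2:B)*(a*φ t*B' + A'*φ t*b)
                 + (φ t*(b*A') - φ t*(a*B') - (2:B)*(b*φ t*A') - A'*b*φ t
                    - (2:B)*(B'*φ t*a) + B'*a*φ t + φ t*(B'*a) - φ t*(A'*b)
                    - a*B'*φ t + b*A'*φ t)) := by noncomm_ring
        rw [cert, rD, rbA, raB, rbdA, rAb, rBda, rBa, raA, rAa, rbB, rBb]
        noncomm_ring
  -- powers of a+b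
  have powab : ∀ k : ℕ, (a+b)^k * (b - a) = b^(k+1) - a^(k+1) := by
    intro k; induction k with
    | zero => simp
    | succ k ih =>
      rw [pow_succ' (a+b) k, mul_assoc, ih]
      have cert : (a+b)*(b^(k+1) - a^(k+1))
          = (b*b^(k+1) - a*a^(k+1)) + (a*b^(k+1) - b*a^(k+1)) := by noncomm_ring
      rw [cert, hab1 k, hba1 k,
          show b*b^(k+1) = b^(k+1+1) from (pow_succ' b (k+1)).symm,
          show a*a^(k+1) = a^(k+1+1) from (pow_succ' a (k+1)).symm]
      simp
  -- final assembly
  intro x n hn1 hn2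
  obtain ⟨m, rfl⟩ : ∃ m, n = m + 1 := ⟨n - 1, by omega⟩
  have hm1 : m ≠ 1 := by omega
  have hmain := Sclaim m x
  rw [if_neg hm1, add_zero] at hmain
  rw [Nat.add_sub_cancel, hyab, ← hyt, powab m]
  exact hmain
end

section
/- Let A be an associative algebra over a field F and n ∈ ℕ with char(F) not dividing n. If a linear subspace V of A contains all commutators [u,v] and all n-th powers [u,v]ⁿ of commutators, then V contains the two-sided ideal of A generated by all elements [u, ∑_{σ ∈ S_{n−1}} [u, v_{σ(1)}] ⋯ [u, v_{σ(n−1)}]], where u, v₁, …, v_{n−1} range over A. -/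
open Finset in
private lemma sum_perm_mem_aux
    (F A : Type*) [Field F] [Ring A] [Algebra F A] (n : ℕ)
    (V : Submodule F A)
    (hpow : ∀ u v : A, (u * v - v * u) ^ n ∈ V)
    (u : A) (v : Fin n → A) :
    (∑ σ : Equiv.Perm (Fin n),
      (List.ofFn fun i => u * v (σ i) - v (σ i) * u).prod) ∈ V := by
  classical
  set c : A → A := fun y => u * y - y * u with hcdef
  set P := MultilinearMap.mkPiAlgebraFin F n A with hPdef
  set h : (Fin n → Fin n) → A := fun r => P fun i => c (v (r i)) with hhdef
  have hcsum : ∀ S : Finset (Fin n), ∑ j ∈ S, c (v j) = c (∑ j ∈ S, v j) := by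
    intro S
    simp only [hcdef, Finset.mul_sum, Finset.sum_mul, Finset.sum_sub_distrib]
  have hpowS : ∀ S : Finset (Fin n), (P fun _ => ∑ j ∈ S, c (v j)) ∈ V := by
    intro S
    rw [hPdef, MultilinearMap.mkPiAlgebraFin_apply_const, hcsum]
    exact hpow _ _
  have hZ : (∑ S ∈ (Finset.univ : Finset (Fin n)).powerset,
      (-1:ℤ)^(n - S.card) • (P fun _ => ∑ j ∈ S, c (v j))) ∈ V :=
    Submodule.sum_mem V fun S _ => zsmul_mem (hpowS S) _
  have key : (∑ S ∈ (Finset.univ : Finset (Fin n)).powerset,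
      (-1:ℤ)^(n - S.card) • (P fun _ => ∑ j ∈ S, c (v j)))
      = ∑ σ : Equiv.Perm (Fin n),
        (List.ofFn fun i => u * v (σ i) - v (σ i) * u).prod := by
    have eq1 : ∀ S : Finset (Fin n),
        (P fun _ => ∑ j ∈ S, c (v j))
          = ∑ r ∈ Fintype.piFinset (fun _ : Fin n => S), h r :=
      fun S => P.map_sum_finset (fun _ j => c (v j)) (fun _ => S)
    have eq2 : ∀ S : Finset (Fin n), Fintype.piFinset (fun _ : Fin n => S)
        = Finset.univ.filter (fun r : Fin n → Fin n => ∀ i, r i ∈ S) := by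
      intro S; ext r; simp [Fintype.mem_piFinset]
    calc
      (∑ S ∈ (Finset.univ : Finset (Fin n)).powerset,
          (-1:ℤ)^(n - S.card) • (P fun _ => ∑ j ∈ S, c (v j)))
        = ∑ S ∈ (Finset.univ : Finset (Fin n)).powerset,
            ∑ r ∈ (Finset.univ : Finset (Fin n → Fin n)),
              (if ∀ i, r i ∈ S then (-1:ℤ)^(n - S.card) • h r else 0) := by
          refine Finset.sum_congr rfl fun S _ => ?_
          rw [eq1, eq2, Finset.smul_sum, Finset.sum_filter]
      _ = ∑ r ∈ (Finset.univ : Finset (Fin n → Fin n)),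
            (∑ S ∈ (Finset.univ : Finset (Fin n)).powerset.filter
                (fun S => ∀ i, r i ∈ S), (-1:ℤ)^(n - S.card)) • h r := by
          rw [Finset.sum_comm]
          refine Finset.sum_congr rfl fun r _ => ?_
          rw [Finset.sum_smul, Finset.sum_filter]
      _ = ∑ r ∈ (Finset.univ : Finset (Fin n → Fin n)),
            (if Function.Surjective r then (1:ℤ) else 0) • h r := by
          refine Finset.sum_congr rfl fun r _ => ?_
          congr 1
          calc
            (∑ S ∈ (Finset.univ : Finset (Fin n)).powerset.filter
                (fun S => ∀ i, r i ∈ S), (-1:ℤ)^(n - S.card))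
              = ∑ T ∈ ((Finset.image r Finset.univ)ᶜ).powerset, (-1:ℤ)^T.card := by
                refine Finset.sum_bij' (fun S _ => Sᶜ) (fun T _ => Tᶜ) ?_ ?_ ?_ ?_ ?_
                · intro S hS
                  simp only [Finset.mem_filter, Finset.mem_powerset] at hS
                  rw [Finset.mem_powerset]
                  exact Finset.compl_subset_compl.mpr
                    (Finset.image_subset_iff.mpr fun x _ => hS.2 x)
                · intro T hT
                  simp only [Finset.mem_powerset] at hT
                  simp only [Finset.mem_filter, Finset.mem_powerset]
                  refine ⟨Finset.subset_univ _, fun i => ?_⟩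
                  have : Finset.image r Finset.univ ⊆ Tᶜ := by
                    rw [← compl_compl (Finset.image r Finset.univ)]
                    exact Finset.compl_subset_compl.mpr hT
                  exact this (Finset.mem_image_of_mem r (Finset.mem_univ i))
                · intro S _; exact compl_compl S
                · intro T _; exact compl_compl T
                · intro S _
                  rw [Finset.card_compl]
                  simp
            _ = if Function.Surjective r then (1:ℤ) else 0 := by
                rw [Finset.sum_powerset_neg_one_pow_card]
                have himg : ((Finset.image r Finset.univ)ᶜ = ∅) ↔ Function.Surjective r := by
                  rw [Finset.compl_eq_empty_iff, Finset.eq_univ_iff_forall]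
                  simp [Finset.mem_image, Function.Surjective, eq_comm]
                simp only [himg]
      _ = ∑ r ∈ Finset.univ.filter (fun r : Fin n → Fin n => Function.Surjective r),
            h r := by
          rw [Finset.sum_filter]
          refine Finset.sum_congr rfl fun r _ => ?_
          split <;> simp
      _ = ∑ σ : Equiv.Perm (Fin n),
            (List.ofFn fun i => u * v (σ i) - v (σ i) * u).prod := by
          refine Finset.sum_bij
            (fun r hr => Equiv.ofBijective r
              (Finite.surjective_iff_bijective.mp (Finset.mem_filter.mp hr).2))
            (fun r hr => Finset.mem_univ _) ?_ ?_ ?_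
          · intro r1 h1 r2 h2 heq
            have := congrArg (fun e : Equiv.Perm (Fin n) => (e : Fin n → Fin n)) heq
            exact this
          · intro σ _
            refine ⟨⇑σ, Finset.mem_filter.mpr ⟨Finset.mem_univ _, σ.surjective⟩, ?_⟩
            exact Equiv.ext fun x => rfl
          · intro r hr
            rw [hhdef]
            simp only [hPdef, MultilinearMap.mkPiAlgebraFin_apply]
            rfl
  rwa [key] at hZ


private lemma key_lemma
    (F A : Type*) [Field F] [Ring A] [Algebra F A] (m : ℕ)
    (hn : ((m + 1 : ℕ) : F) ≠ 0)
    (V : Submodule F A)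
    (hcomm : ∀ u v : A, u * v - v * u ∈ V)
    (hpow : ∀ u v : A, (u * v - v * u) ^ (m + 1) ∈ V)
    (u x : A) (w : Fin m → A) :
    (∑ σ : Equiv.Perm (Fin m),
      (List.ofFn fun i => u * w (σ i) - w (σ i) * u).prod) * (u * x - x * u) ∈ V := by
  classical
  set q := V.mkQ with hqdef
  have hq : ∀ a b : A, q (a * b) = q (b * a) := by
    intro a b
    rw [hqdef, Submodule.mkQ_apply, Submodule.mkQ_apply]
    exact (Submodule.Quotient.eq V).mpr (hcomm a b)
  have hrot : ∀ l l' : List A, q ((l ++ l').prod) = q ((l' ++ l).prod) := by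
    intro l l'
    rw [List.prod_append, List.prod_append, hq]
  have hshift : ∀ (f : Fin (m + 1) → A) (j : Fin (m + 1)),
      q ((List.ofFn fun i => f (i + j)).prod) = q ((List.ofFn f).prod) := by
    intro f j
    have hlist : (List.ofFn fun i => f (i + j)) = (List.ofFn f).rotate j.val := by
      apply List.ext_getElem (by simp)
      intro i h1 h2
      rw [List.getElem_rotate]
      simp only [List.getElem_ofFn]
      congr 1
      apply Fin.ext
      simp [Fin.add_def]
    rw [hlist,
      List.rotate_eq_drop_append_take (by simpa using j.isLt.le),
      hrot, List.take_append_drop]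
  -- the element of V coming from polarization, with v = cons x w
  have h0 := sum_perm_mem_aux F A (m + 1) V hpow u (Fin.cons x w)
  have h0q : q (∑ σ : Equiv.Perm (Fin (m + 1)),
      (List.ofFn fun i =>
        u * (Fin.cons x w : Fin (m+1) → A) (σ i)
          - (Fin.cons x w : Fin (m+1) → A) (σ i) * u).prod) = 0 := by
    rw [hqdef, Submodule.mkQ_apply, Submodule.Quotient.mk_eq_zero]
    exact h0
  set c : A → A := fun y => u * y - y * u with hcdef
  set T : A := ∑ σ : Equiv.Perm (Fin m),
      (List.ofFn fun i => u * w (σ i) - w (σ i) * u).prod with hTdef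
  -- the reindexing bijection
  set bwd : Fin (m + 1) × Equiv.Perm (Fin m) → Equiv.Perm (Fin (m + 1)) :=
    fun p => (Equiv.Perm.decomposeFin.symm (0, p.2)) * Equiv.addRight p.1 with hbwd
  have hbij : Function.Bijective bwd := by
    rw [Fintype.bijective_iff_injective_and_card]
    constructor
    · rintro ⟨j, τ⟩ ⟨j', τ'⟩ heq
      simp only [hbwd] at heq
      have hj : j = j' := by
        have h1 := congrArg (fun e : Equiv.Perm (Fin (m+1)) => e (-j)) heq
        simp only [Equiv.Perm.mul_apply, Equiv.coe_addRight, neg_add_cancel] at h1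
        have h2 : (Equiv.Perm.decomposeFin.symm (0, τ)) 0 = 0 :=
          Equiv.Perm.decomposeFin_symm_apply_zero 0 τ
        rw [h2] at h1
        have h3 : (Equiv.Perm.decomposeFin.symm (0, τ')) (-j + j') = 0 := h1.symm
        have h4 : (Equiv.Perm.decomposeFin.symm (0, τ')) 0 = 0 :=
          Equiv.Perm.decomposeFin_symm_apply_zero 0 τ'
        have h5 : (-j + j' : Fin (m+1)) = 0 :=
          (Equiv.Perm.decomposeFin.symm (0, τ')).injective (h3.trans h4.symm)
        have := congrArg (j + ·) h5
        simpa [add_assoc] using this.symm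
      subst hj
      have : Equiv.Perm.decomposeFin.symm (0, τ) = Equiv.Perm.decomposeFin.symm (0, τ') :=
        mul_right_cancel heq
      have h6 := Equiv.Perm.decomposeFin.symm.injective this
      have h7 : τ = τ' := (Prod.ext_iff.mp h6).2
      rw [h7]
    · simp [Fintype.card_perm, Fintype.card_prod, Nat.factorial_succ]
  -- rewrite the big sum via the bijection
  have hterm : ∀ p : Fin (m + 1) × Equiv.Perm (Fin m),
      q ((List.ofFn fun i =>
        u * (Fin.cons x w : Fin (m+1) → A) ((bwd p) i)
          - (Fin.cons x w : Fin (m+1) → A) ((bwd p) i) * u).prod)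
      = q ((u * x - x * u) *
          (List.ofFn fun i => u * w (p.2 i) - w (p.2 i) * u).prod) := by
    rintro ⟨j, τ⟩
    have hb : ∀ i : Fin (m + 1), (bwd (j, τ)) i
        = Equiv.Perm.decomposeFin.symm (0, τ) (i + j) := by
      intro i
      simp [hbwd]
    simp only [hb]
    rw [hshift (fun i => u * (Fin.cons x w : Fin (m+1) → A)
        (Equiv.Perm.decomposeFin.symm (0, τ) i)
          - (Fin.cons x w : Fin (m+1) → A)
        (Equiv.Perm.decomposeFin.symm (0, τ) i) * u) j]
    congr 1
    rw [List.ofFn_succ]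
    simp [Equiv.Perm.decomposeFin_symm_apply_zero,
      Equiv.Perm.decomposeFin_symm_apply_succ]
  have hbig : (0 : A ⧸ V) = (m + 1) • q ((u * x - x * u) * T) := by
    rw [← h0q, map_sum]
    rw [← Fintype.sum_bijective bwd hbij _ _ (fun p => rfl)]
    calc
      (∑ p : Fin (m + 1) × Equiv.Perm (Fin m),
        q ((List.ofFn fun i =>
          u * (Fin.cons x w : Fin (m+1) → A) ((bwd p) i)
            - (Fin.cons x w : Fin (m+1) → A) ((bwd p) i) * u).prod))
        = ∑ p : Fin (m + 1) × Equiv.Perm (Fin m),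
            q ((u * x - x * u) *
              (List.ofFn fun i => u * w (p.2 i) - w (p.2 i) * u).prod) := by
          exact Finset.sum_congr rfl fun p _ => hterm p
      _ = ∑ _j : Fin (m + 1), ∑ τ : Equiv.Perm (Fin m),
            q ((u * x - x * u) *
              (List.ofFn fun i => u * w (τ i) - w (τ i) * u).prod) := by
          rw [Fintype.sum_prod_type]
      _ = (m + 1) • q ((u * x - x * u) * T) := by
          rw [Finset.sum_const, Finset.card_univ, Fintype.card_fin]
          congr 1
          rw [← map_sum, ← Finset.mul_sum, hTdef]
  have hz : q ((u * x - x * u) * T) = 0 := by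
    have h1 : ((m + 1 : ℕ) : F) • q ((u * x - x * u) * T) = 0 := by
      rw [Nat.cast_smul_eq_nsmul, ← hbig]
    rcases smul_eq_zero.mp h1 with h | h
    · exact absurd h hn
    · exact h
  have : q (T * (u * x - x * u)) = 0 := by rw [hq, hz]
  rw [hqdef, Submodule.mkQ_apply, Submodule.Quotient.mk_eq_zero] at this
  exact this


theorem subspace_contains_ideal_of_commutator_powers
    (F A : Type*) [Field F] [Ring A] [Algebra F A] (n : ℕ)
    (hn : (n : F) ≠ 0)
    (V : Submodule F A)
    (hcomm : ∀ u v : A, u * v - v * u ∈ V)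
    (hpow : ∀ u v : A, (u * v - v * u) ^ n ∈ V) :
    ∀ a ∈ TwoSidedIdeal.span
        {g : A | ∃ (u : A) (w : Fin (n - 1) → A),
          g = u * (∑ σ : Equiv.Perm (Fin (n - 1)),
                    (List.ofFn fun i => u * w (σ i) - w (σ i) * u).prod)
            - (∑ σ : Equiv.Perm (Fin (n - 1)),
                    (List.ofFn fun i => u * w (σ i) - w (σ i) * u).prod) * u},
      a ∈ V := by
  obtain ⟨m, rfl⟩ : ∃ m, n = m + 1 := by
    cases n with
    | zero => simp at hn
    | succ m => exact ⟨m, rfl⟩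
  intro a ha
  rw [TwoSidedIdeal.mem_span_iff] at ha
  -- the auxiliary two-sided ideal contained in V
  set W : TwoSidedIdeal A := TwoSidedIdeal.mk'
    {a : A | a ∈ V ∧ ∀ x : A, x * a ∈ V}
    ⟨V.zero_mem, fun x => by simpa using V.zero_mem⟩
    (fun {a b} ha hb => ⟨V.add_mem ha.1 hb.1,
      fun x => by rw [mul_add]; exact V.add_mem (ha.2 x) (hb.2 x)⟩)
    (fun {a} ha => ⟨V.neg_mem ha.1,
      fun x => by rw [mul_neg]; exact V.neg_mem (ha.2 x)⟩)
    (fun {r a} ha => ⟨ha.2 r, fun x => by rw [← mul_assoc]; exact ha.2 (x * r)⟩)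
    (fun {a r} ha => by
      constructor
      · have h1 : a * r - r * a ∈ V := hcomm a r
        have h2 : r * a ∈ V := ha.2 r
        have : a * r = (a * r - r * a) + r * a := by abel
        rw [this]; exact V.add_mem h1 h2
      · intro x
        have h1 : (x * a) * r - r * (x * a) ∈ V := hcomm (x * a) r
        have h2 : (r * x) * a ∈ V := ha.2 (r * x)
        have : x * (a * r) = ((x * a) * r - r * (x * a)) + (r * x) * a := by
          noncomm_ring
        rw [this]; exact V.add_mem h1 h2) with hW
  have hgen : {g : A | ∃ (u : A) (w : Fin (m + 1 - 1) → A),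
      g = u * (∑ σ : Equiv.Perm (Fin (m + 1 - 1)),
                (List.ofFn fun i => u * w (σ i) - w (σ i) * u).prod)
        - (∑ σ : Equiv.Perm (Fin (m + 1 - 1)),
                (List.ofFn fun i => u * w (σ i) - w (σ i) * u).prod) * u} ⊆ (W : Set A) := ?_
  · have haW := ha W hgen
    rw [hW, TwoSidedIdeal.mem_mk'] at haW
    exact haW.1
  rintro g ⟨u, w, rfl⟩
  rw [SetLike.mem_coe, TwoSidedIdeal.mem_mk']
  set T : A := ∑ σ : Equiv.Perm (Fin (m + 1 - 1)),
      (List.ofFn fun i => u * w (σ i) - w (σ i) * u).prod with hT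
  constructor
  · exact hcomm u T
  · intro x
    have hkey : T * (u * x - x * u) ∈ V := key_lemma F A m hn V hcomm hpow u x w
    have h1 : u * (x * T) - (x * T) * u ∈ V := hcomm u (x * T)
    have h2 : (u * x - x * u) * T - T * (u * x - x * u) ∈ V := hcomm (u * x - x * u) T
    have heq : x * (u * T - T * u)
        = (u * (x * T) - (x * T) * u)
          - ((u * x - x * u) * T - T * (u * x - x * u))
          - T * (u * x - x * u) := by noncomm_ring
    rw [heq]
    exact V.sub_mem (V.sub_mem h1 h2) hkey
end

section
/- Let A be a unital associative algebra over a field F with char(F) ≠ 2 such that A equals its commutator ideal K(A) (the two-sided ideal generated by all [x,y]). Then A = [[A,A],A] ∘ A, where x∘y = xy + yx and [[A,A],A]∘A denotes the linear span of all [[a₁,a₂],a₃]∘a₄. -/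
namespace DCJaux

def cm {A : Type*} [Ring A] (a b : A) : A := a * b - b * a

def SS (F : Type*) (A : Type*) [Field F] [Ring A] [Algebra F A] : Submodule F A :=
  Submodule.span F {x : A | ∃ a₁ a₂ a₃ a₄ : A, x = cm (cm a₁ a₂) a₃ * a₄ + a₄ * cm (cm a₁ a₂) a₃}

variable {F A : Type*} [Field F] [Ring A] [Algebra F A]

lemma gen_mem (F : Type*) [Field F] [Algebra F A] (a₁ a₂ a₃ a₄ : A) :
    cm (cm a₁ a₂) a₃ * a₄ + a₄ * cm (cm a₁ a₂) a₃ ∈ SS F A :=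
  Submodule.subset_span ⟨a₁, a₂, a₃, a₄, rfl⟩

variable (hchar : (2 : F) ≠ 0)
include hchar

lemma half_smul {u : A} : ((2:F)⁻¹) • (u + u) = u := by
  rw [← two_smul F, smul_smul, inv_mul_cancel₀ hchar, one_smul]

lemma dc_mem (a b c : A) : cm (cm a b) c ∈ SS F A := by
  have h := gen_mem F a b c (1 : A)
  rw [mul_one, one_mul] at h
  rw [← half_smul hchar (u := cm (cm a b) c)]
  exact (SS F A).smul_mem _ h

lemma mul_dc_mem (x a b c : A) : x * cm (cm a b) c ∈ SS F A := by
  have key : ((2:F)⁻¹) • ((cm (cm a b) c * x + x * cm (cm a b) c) - cm (cm (cm a b) c) x)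
      = x * cm (cm a b) c := by
    have h : (cm (cm a b) c * x + x * cm (cm a b) c) - cm (cm (cm a b) c) x
        = x * cm (cm a b) c + x * cm (cm a b) c := by
      simp only [cm]; noncomm_ring
    rw [h, half_smul hchar]
  rw [← key]
  exact (SS F A).smul_mem _ ((SS F A).sub_mem (gen_mem F a b c x) (dc_mem hchar (cm a b) c x))

lemma dc_mul_mem (a b c x : A) : cm (cm a b) c * x ∈ SS F A := by
  have key : ((2:F)⁻¹) • ((cm (cm a b) c * x + x * cm (cm a b) c) + cm (cm (cm a b) c) x)
      = cm (cm a b) c * x := by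
    have h : (cm (cm a b) c * x + x * cm (cm a b) c) + cm (cm (cm a b) c) x
        = cm (cm a b) c * x + cm (cm a b) c * x := by
      simp only [cm]; noncomm_ring
    rw [h, half_smul hchar]
  rw [← key]
  exact (SS F A).smul_mem _ ((SS F A).add_mem (gen_mem F a b c x) (dc_mem hchar (cm a b) c x))

lemma mul_dc_mul_mem (x a b c y : A) : x * cm (cm a b) c * y ∈ SS F A := by
  have key : x * cm (cm a b) c * y = x * y * cm (cm a b) c + x * cm (cm (cm a b) c) y := by
    simp only [cm]; noncomm_ring
  rw [key]
  exact (SS F A).add_mem (mul_dc_mem hchar (x * y) a b c) (mul_dc_mem hchar x (cm a b) c y)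

lemma mul_mem_left' (x : A) {s : A} (hs : s ∈ SS F A) : x * s ∈ SS F A := by
  induction hs using Submodule.span_induction with
  | mem t ht =>
    obtain ⟨a₁, a₂, a₃, a₄, rfl⟩ := ht
    rw [mul_add, ← mul_assoc, ← mul_assoc]
    exact (SS F A).add_mem (mul_dc_mul_mem hchar x a₁ a₂ a₃ a₄) (mul_dc_mem hchar (x * a₄) a₁ a₂ a₃)
  | zero => rw [mul_zero]; exact zero_mem _
  | add u v hu hv hu' hv' => rw [mul_add]; exact add_mem hu' hv'
  | smul c u hu hu' => rw [mul_smul_comm]; exact (SS F A).smul_mem _ hu'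

lemma mul_mem_right' (x : A) {s : A} (hs : s ∈ SS F A) : s * x ∈ SS F A := by
  induction hs using Submodule.span_induction with
  | mem t ht =>
    obtain ⟨a₁, a₂, a₃, a₄, rfl⟩ := ht
    rw [add_mul, mul_assoc]
    exact (SS F A).add_mem (dc_mul_mem hchar a₁ a₂ a₃ (a₄ * x)) (mul_dc_mul_mem hchar a₄ a₁ a₂ a₃ x)
  | zero => rw [zero_mul]; exact zero_mem _
  | add u v hu hv hu' hv' => rw [add_mul]; exact add_mem hu' hv'
  | smul c u hu hu' => rw [smul_mul_assoc]; exact (SS F A).smul_mem _ hu'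

end DCJaux


open Finset in
private theorem DCJaux.one_eq_zero_of_rep {B : Type*} [Ring B]
    {n : ℕ} (z w : Fin n → B) (hzc : ∀ i, z i ∈ Subring.center B)
    (hz2 : ∀ i, z i * z i = 0) (hone : (1 : B) = ∑ i, z i * w i) : (1 : B) = 0 := by
  classical
  set z' : Fin n → Subring.center B := fun i => ⟨z i, hzc i⟩ with hz'
  have hz'2 : ∀ i, z' i * z' i = 0 := fun i => Subtype.ext (by simpa using hz2 i)
  have core : ∀ s : Finset (Fin n),
      (∀ i ∉ s, (∏ j ∈ insert i s, z' j) = 0) → (∏ j ∈ s, z' j) = 0 := by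
    intro s hins
    rw [← ZeroMemClass.coe_eq_zero]
    calc ((∏ j ∈ s, z' j : Subring.center B) : B)
        = ((∏ j ∈ s, z' j : Subring.center B) : B) * ∑ i, z i * w i := by
          rw [← hone, mul_one]
      _ = ∑ i, (((∏ j ∈ s, z' j) * z' i : Subring.center B) : B) * w i := by
          rw [Finset.mul_sum]
          refine Finset.sum_congr rfl fun i _ => ?_
          push_cast
          rw [mul_assoc]
      _ = 0 := by
          refine Finset.sum_eq_zero fun i _ => ?_
          by_cases hi : i ∈ s
          · have h0 : (∏ j ∈ s, z' j) * z' i = 0 := by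
              rw [← Finset.prod_erase_mul s _ hi, mul_assoc, hz'2, mul_zero]
            rw [h0]; simp
          · have h0 : (∏ j ∈ s, z' j) * z' i = ∏ j ∈ insert i s, z' j := by
              rw [Finset.prod_insert hi, mul_comm]
            rw [h0, hins i hi]; simp
  have key : ∀ (m : ℕ) (s : Finset (Fin n)), n ≤ s.card + m → (∏ j ∈ s, z' j) = 0 := by
    intro m
    induction m with
    | zero =>
      intro s hs
      have hsu : s = Finset.univ := Finset.eq_univ_of_card s
        (le_antisymm (by simpa using Finset.card_le_univ s) (by simpa using hs))
      exact core s fun i hi => absurd (by simp [hsu]) hi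
    | succ m ih =>
      intro s hs
      refine core s fun i hi => ih _ ?_
      rw [Finset.card_insert_of_notMem hi]
      omega
  have h0 := key n ∅ (by simp)
  rw [Finset.prod_empty] at h0
  simpa using congrArg (fun x : Subring.center B => (x : B)) h0

open DCJaux in
theorem eq_span_double_commutator_jordan_of_eq_commutator_ideal
    (F A : Type*) [Field F] [Ring A] [Algebra F A] (hchar : (2 : F) ≠ 0)
    (hK : TwoSidedIdeal.span {x : A | ∃ a b : A, x = a * b - b * a} = ⊤) :
    Submodule.span F
      {x : A | ∃ a₁ a₂ a₃ a₄ : A,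
        x = ((a₁ * a₂ - a₂ * a₁) * a₃ - a₃ * (a₁ * a₂ - a₂ * a₁)) * a₄
          + a₄ * ((a₁ * a₂ - a₂ * a₁) * a₃ - a₃ * (a₁ * a₂ - a₂ * a₁))} = ⊤ := by
  classical
  set I : TwoSidedIdeal A := TwoSidedIdeal.span {t : A | ∃ a b c : A, t = cm (cm a b) c} with hI
  set π : A →+* I.ringCon.Quotient := RingCon.mk' I.ringCon with hπ
  have hπsurj : ∀ b : I.ringCon.Quotient, ∃ a : A, π a = b := fun b => by
    obtain ⟨a, ha⟩ := Quotient.exists_rep b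
    exact ⟨a, ha⟩
  have hdc0 : ∀ p q r : I.ringCon.Quotient, cm (cm p q) r = 0 := by
    intro p q r
    obtain ⟨a, rfl⟩ := hπsurj p
    obtain ⟨b, rfl⟩ := hπsurj q
    obtain ⟨c, rfl⟩ := hπsurj r
    have hmem : cm (cm a b) c ∈ I := by
      rw [hI]
      exact TwoSidedIdeal.subset_span ⟨a, b, c, rfl⟩
    have hrel : I.ringCon (cm (cm a b) c) 0 := by
      rw [TwoSidedIdeal.rel_iff]
      simpa using hmem
    have : π (cm (cm a b) c) = π 0 := (RingCon.eq _).mpr hrel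
    rw [map_zero] at this
    rw [← this]
    simp [cm, map_mul, map_sub]
  have hcent : ∀ p q : I.ringCon.Quotient, cm p q ∈ Subring.center (I.ringCon.Quotient) := by
    intro p q
    rw [Subring.mem_center_iff]
    intro g
    have h := hdc0 p q g
    rw [cm, sub_eq_zero] at h
    exact h.symm
  have hhalf : ∀ t : I.ringCon.Quotient, t + t = 0 → t = 0 := by
    intro t ht
    have h2 : π (algebraMap F A ((2:F)⁻¹)) * (2 : I.ringCon.Quotient) = 1 := by
      have e1 : (2 : I.ringCon.Quotient) = π (2 : A) := (map_ofNat π 2).symm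
      have e2 : algebraMap F A ((2:F)⁻¹) * (2 : A) = 1 := by
        rw [show (2 : A) = algebraMap F A (2 : F) from (map_ofNat (algebraMap F A) 2).symm,
          ← map_mul, inv_mul_cancel₀ hchar, map_one]
      rw [e1, ← map_mul, e2, map_one]
    calc t = (π (algebraMap F A ((2:F)⁻¹)) * 2) * t := by rw [h2, one_mul]
      _ = π (algebraMap F A ((2:F)⁻¹)) * (t + t) := by rw [mul_assoc, two_mul]
      _ = 0 := by rw [ht, mul_zero]
  have hsq : ∀ p q : I.ringCon.Quotient, cm p q * cm p q = 0 := by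
    intro p q
    have hid : cm (cm (p*p) q) q
        = (p * (cm p q * q - q * cm p q) + (cm p q * q - q * cm p q) * p)
          + (cm p q * cm p q + cm p q * cm p q) := by
      simp only [cm]; noncomm_ring
    have hzq : cm p q * q - q * cm p q = 0 := by
      rw [sub_eq_zero]
      exact (Subring.mem_center_iff.mp (hcent p q) q).symm
    rw [hzq, hdc0] at hid
    simp only [mul_zero, zero_mul, add_zero, zero_add] at hid
    exact hhalf _ hid.symm
  have h1A : (1:A) ∈ TwoSidedIdeal.span {x : A | ∃ a b : A, x = a * b - b * a} := by
    rw [hK]; exact TwoSidedIdeal.mem_top _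
  rw [TwoSidedIdeal.mem_span_iff_mem_addSubgroup_closure] at h1A
  have hrep := AddSubgroup.closure_induction
    (p := fun t _ => ∃ (n : ℕ) (z w : Fin n → I.ringCon.Quotient),
      (∀ i, z i ∈ Subring.center (I.ringCon.Quotient)) ∧ (∀ i, z i * z i = 0) ∧
        π t = ∑ i, z i * w i)
    ?_ ?_ ?_ ?_ h1A
  rotate_left
  · rintro t ⟨-, ⟨x, -, c, ⟨a, b, rfl⟩, rfl⟩, y, -, rfl⟩
    refine ⟨1, fun _ => cm (π a) (π b), fun _ => π x * π y,
      fun _ => hcent _ _, fun _ => hsq _ _, ?_⟩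
    have hc1 : π x * cm (π a) (π b) = cm (π a) (π b) * π x :=
      Subring.mem_center_iff.mp (hcent (π a) (π b)) (π x)
    rw [Fin.sum_univ_one]
    calc π (x * (a * b - b * a) * y) = π x * cm (π a) (π b) * π y := by
          simp [cm, map_mul, map_sub]
      _ = cm (π a) (π b) * (π x * π y) := by rw [hc1, mul_assoc]
  · exact ⟨0, Fin.elim0, Fin.elim0, fun i => i.elim0, fun i => i.elim0, by simp⟩
  · rintro t₁ t₂ - - ⟨n₁, z₁, w₁, hc₁, h2₁, hs₁⟩ ⟨n₂, z₂, w₂, hc₂, h2₂, hs₂⟩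
    refine ⟨n₁ + n₂, Fin.append z₁ z₂, Fin.append w₁ w₂, ?_, ?_, ?_⟩
    · intro i
      refine Fin.addCases (fun j => ?_) (fun j => ?_) i
      · rw [Fin.append_left]; exact hc₁ j
      · rw [Fin.append_right]; exact hc₂ j
    · intro i
      refine Fin.addCases (fun j => ?_) (fun j => ?_) i
      · rw [Fin.append_left]; exact h2₁ j
      · rw [Fin.append_right]; exact h2₂ j
    · rw [map_add, hs₁, hs₂, Fin.sum_univ_add]
      congr 1
      · exact Finset.sum_congr rfl fun j _ => by rw [Fin.append_left, Fin.append_left]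
      · exact Finset.sum_congr rfl fun j _ => by rw [Fin.append_right, Fin.append_right]
  · rintro t - ⟨n, z, w, hc, h2, hs⟩
    refine ⟨n, z, fun i => -(w i), hc, h2, ?_⟩
    rw [map_neg, hs, ← Finset.sum_neg_distrib]
    exact Finset.sum_congr rfl fun i _ => (mul_neg _ _).symm
  obtain ⟨n, z, w, hzc, hz2, hsum⟩ := hrep
  rw [map_one] at hsum
  have h10 : (1 : I.ringCon.Quotient) = 0 := one_eq_zero_of_rep z w hzc hz2 hsum
  have h1I : (1:A) ∈ I := by
    have hrel : I.ringCon 1 0 := (RingCon.eq _).mp (by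
      rw [RingCon.coe_one, RingCon.coe_zero]; exact h10)
    rw [TwoSidedIdeal.rel_iff] at hrel
    simpa using hrel
  have hIS : ∀ y, y ∈ I → y ∈ SS F A := by
    intro y hy
    rw [hI] at hy
    have := TwoSidedIdeal.mem_span_iff.mp hy
      (TwoSidedIdeal.mk' (SS F A : Set A) (zero_mem _)
        (fun ha hb => add_mem ha hb) (fun ha => neg_mem ha)
        (fun {x s} hs => mul_mem_left' hchar x hs)
        (fun {s x} hs => mul_mem_right' hchar x hs))
      (by
        rintro t ⟨a, b, c, rfl⟩
        rw [SetLike.mem_coe, TwoSidedIdeal.mem_mk']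
        exact dc_mem hchar a b c)
    rwa [TwoSidedIdeal.mem_mk'] at this
  show SS F A = ⊤
  rw [Submodule.eq_top_iff']
  intro x
  exact hIS x (by simpa using I.mul_mem_left x 1 h1I)
end

section
/- Let A be a unital associative algebra over a field with char ≠ 2 such that A = K(A), its commutator ideal. Then the subalgebra of A generated by [A,A] is all of A. -/
/-!
By the identity `⁅⁅x, y⁆, z⁆ * w = ⁅⁅x, y⁆ * w, z⁆ - ⁅x, y⁆ * ⁅w, z⁆`, the subalgebra generated by
the commutators contains the two-sided ideal `J` generated by the double commutators `⁅⁅x, y⁆, z⁆`,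
so it suffices to show `J = A`. Modulo any ideal `I ⊇ J` commutators are central and, since `2` is
invertible, square to zero. Hence if `1 ≡ z (mod I)` with `z` in the ideal generated by a commutator
`s`, then `s ≡ z * s ∈ A s²` lies in `I`, and so does `1`. The elements that are superfluous in this
sense form an ideal; it contains the commutators, hence `1` because `A = K(A)`, which gives `J = A`.
-/

namespace TwoSidedIdeal

variable {R : Type*} [Ring R]

theorem mul_mem_of_mem_span_singleton {I : TwoSidedIdeal R} {x z : R}
    (hcomm : ∀ c, ⁅x, c⁆ ∈ I) (hsq : x * x ∈ I) (hz : z ∈ span {x}) : z * x ∈ I := by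
  induction hz using span_induction with
  | mem y hy => rwa [Set.mem_singleton_iff.mp hy]
  | zero => simp [I.zero_mem]
  | add y w _ _ hy hw => simpa only [add_mul] using I.add_mem hy hw
  | neg y _ hy => simpa only [neg_mul] using I.neg_mem hy
  | left_absorb a y _ hy => simpa only [mul_assoc] using I.mul_mem_left a _ hy
  | right_absorb b y _ hy =>
    have h : y * b * x = y * x * b - y * ⁅x, b⁆ := by rw [Ring.lie_def]; noncomm_ring
    rw [h]
    exact I.sub_mem (I.mul_mem_right _ b hy) (I.mul_mem_left y _ (hcomm b))

theorem eq_top_of_sup_span_singleton_eq_top {I : TwoSidedIdeal R} {x : R}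
    (hcomm : ∀ c, ⁅x, c⁆ ∈ I) (hsq : x * x ∈ I) (h : I ⊔ span {x} = ⊤) : I = ⊤ := by
  obtain ⟨y, hy, z, hz, hyz⟩ := mem_sup.mp (h ▸ mem_top R : (1 : R) ∈ I ⊔ span {x})
  have hx : x ∈ I := by
    have h1x := I.add_mem (I.mul_mem_right y x hy) (mul_mem_of_mem_span_singleton hcomm hsq hz)
    rwa [← add_mul, hyz, one_mul] at h1x
  rwa [sup_eq_left.mpr (span_le.mpr (Set.singleton_subset_iff.mpr hx))] at h

theorem eq_top_of_span_eq_top {J : TwoSidedIdeal R} {s : Set R}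
    (hs : ∀ x ∈ s, ∀ I, J ≤ I → I ⊔ span {x} = ⊤ → I = ⊤) (hspan : span s = ⊤) :
    J = ⊤ := by
  -- The elements satisfying `P` form a two-sided ideal containing `s`.
  let P : R → Prop := fun x ↦ ∀ I, J ≤ I → I ⊔ span {x} = ⊤ → I = ⊤
  have P_of_mem_span {x z : R} (hzx : z ∈ span {x}) (hx : P x) : P z := fun I hJI h ↦
    hx I hJI (top_le_iff.mp (h ▸ sup_le_sup_left (span_le.mpr (by simpa using hzx)) I))
  have P_of_mem : ∀ x ∈ span s, P x := fun x hx ↦ by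
    induction hx using span_induction with
    | mem x hx => exact hs x hx
    | zero => intro I _ h; rwa [sup_eq_left.mpr (span_le.mpr (by simp [I.zero_mem]))] at h
    | add x y _ _ hx hy =>
      intro I hJI h
      refine hy I hJI (hx _ (hJI.trans le_sup_left) (top_le_iff.mp (h ▸ sup_le ?_ ?_)))
      · exact le_sup_left.trans le_sup_left
      · refine span_le.mpr (Set.singleton_subset_iff.mpr (add_mem _ ?_ ?_))
        · exact mem_sup_right (subset_span rfl)
        · exact mem_sup_left (mem_sup_right (subset_span rfl))
    | neg x _ hx => exact P_of_mem_span (neg_mem _ (subset_span rfl)) hx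
    | left_absorb a x _ hx => exact P_of_mem_span (mul_mem_left _ a _ (subset_span rfl)) hx
    | right_absorb b x _ hx => exact P_of_mem_span (mul_mem_right _ _ b (subset_span rfl)) hx
  exact P_of_mem 1 (hspan ▸ mem_top R) J le_rfl
    ((one_mem_iff _).mp (mem_sup_right (subset_span rfl)))

end TwoSidedIdeal

section Commutators

variable {A : Type*} [Ring A]

theorem lie_mul_self_mem_of_lie_lie_mem {I : TwoSidedIdeal A} (h2 : IsUnit (2 : A))
    (hI : ∀ a b c : A, ⁅⁅a, b⁆, c⁆ ∈ I) (x y : A) : ⁅x, y⁆ * ⁅x, y⁆ ∈ I := by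
  -- Modulo `I` commutators are central and `⁅·, x⁆` is a derivation, so
  -- `⁅⁅x, y * y⁆, x⁆ ≡ -2 * ⁅x, y⁆ * ⁅x, y⁆`.
  have key : 2 * (⁅x, y⁆ * ⁅x, y⁆)
      = ⁅⁅x, y⁆, x⁆ * y + ⁅⁅x, y⁆, x * y⁆ - ⁅⁅x, y * y⁆, x⁆ - ⁅⁅x, y⁆, y⁆ * x := by
    simp only [Ring.lie_def]; noncomm_ring
  have h2sq : 2 * (⁅x, y⁆ * ⁅x, y⁆) ∈ I := by
    rw [key]
    exact I.sub_mem (I.sub_mem (I.add_mem (I.mul_mem_right _ y (hI _ _ _)) (hI _ _ _))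
      (hI _ _ _)) (I.mul_mem_right _ x (hI _ _ _))
  simpa [← mul_assoc] using I.mul_mem_left (↑h2.unit⁻¹) _ h2sq

theorem span_lie_lie_eq_top (h2 : IsUnit (2 : A))
    (hK : TwoSidedIdeal.span {x : A | ∃ a b : A, x = ⁅a, b⁆} = ⊤) :
    TwoSidedIdeal.span {x : A | ∃ a b c : A, x = ⁅⁅a, b⁆, c⁆} = ⊤ := by
  refine TwoSidedIdeal.eq_top_of_span_eq_top ?_ hK
  rintro _ ⟨a, b, rfl⟩ I hJI
  have hI (a b c : A) : ⁅⁅a, b⁆, c⁆ ∈ I := hJI (TwoSidedIdeal.subset_span ⟨a, b, c, rfl⟩)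
  exact TwoSidedIdeal.eq_top_of_sup_span_singleton_eq_top (hI a b)
    (lie_mul_self_mem_of_lie_lie_mem h2 hI a b)

theorem lie_lie_mul_eq (x y z w : A) : ⁅⁅x, y⁆, z⁆ * w = ⁅⁅x, y⁆ * w, z⁆ - ⁅x, y⁆ * ⁅w, z⁆ := by
  simp only [Ring.lie_def]; noncomm_ring

variable {F : Type*} [CommRing F] [Algebra F A]

theorem lie_lie_mul_mem_adjoin (x y z w : A) :
    ⁅⁅x, y⁆, z⁆ * w ∈ NonUnitalAlgebra.adjoin F {x : A | ∃ a b : A, x = ⁅a, b⁆} := by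
  rw [lie_lie_mul_eq]
  exact sub_mem (NonUnitalAlgebra.subset_adjoin F ⟨_, _, rfl⟩)
    (mul_mem (NonUnitalAlgebra.subset_adjoin F ⟨_, _, rfl⟩)
      (NonUnitalAlgebra.subset_adjoin F ⟨_, _, rfl⟩))

theorem mul_lie_lie_mul_mem_adjoin (x y z a b : A) :
    a * ⁅⁅x, y⁆, z⁆ * b ∈ NonUnitalAlgebra.adjoin F {x : A | ∃ a b : A, x = ⁅a, b⁆} := by
  have h : a * ⁅⁅x, y⁆, z⁆ * b = ⁅⁅x, y⁆, z⁆ * (a * b) - ⁅⁅⁅x, y⁆, z⁆, a⁆ * b := by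
    simp only [Ring.lie_def]; noncomm_ring
  rw [h]
  exact sub_mem (lie_lie_mul_mem_adjoin x y z _) (lie_lie_mul_mem_adjoin _ z a b)

theorem mem_adjoin_of_mem_span_lie_lie {t : A}
    (ht : t ∈ TwoSidedIdeal.span {x : A | ∃ a b c : A, x = ⁅⁅a, b⁆, c⁆}) :
    t ∈ NonUnitalAlgebra.adjoin F {x : A | ∃ a b : A, x = ⁅a, b⁆} := by
  suffices ∀ a b, a * t * b ∈ NonUnitalAlgebra.adjoin F {x : A | ∃ a b : A, x = ⁅a, b⁆} by
    simpa using this 1 1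
  induction ht using TwoSidedIdeal.span_induction with
  | mem t ht => obtain ⟨x, y, z, rfl⟩ := ht; exact mul_lie_lie_mul_mem_adjoin x y z
  | zero => simp
  | add t u _ _ ht hu => intro a b; simpa only [mul_add, add_mul] using add_mem (ht a b) (hu a b)
  | neg t _ ht => intro a b; simpa only [mul_neg, neg_mul] using neg_mem (ht a b)
  | left_absorb c t _ ht => intro a b; simpa only [mul_assoc] using ht (a * c) b
  | right_absorb c t _ ht => intro a b; simpa only [mul_assoc] using ht a (c * b)

end Commutators

theorem adjoin_commutators_eq_top_of_eq_commutator_ideal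
    (F A : Type*) [Field F] [Ring A] [Algebra F A] (hchar : (2 : F) ≠ 0)
    (hK : TwoSidedIdeal.span {x : A | ∃ a b : A, x = a * b - b * a} = ⊤) :
    NonUnitalAlgebra.adjoin F {x : A | ∃ a b : A, x = a * b - b * a} = ⊤ := by
  have h2 : IsUnit (2 : A) := map_ofNat (algebraMap F A) 2 ▸ (IsUnit.mk0 _ hchar).map _
  have hT := span_lie_lie_eq_top h2 hK
  exact eq_top_iff.mpr fun t _ ↦ mem_adjoin_of_mem_span_lie_lie (hT ▸ TwoSidedIdeal.mem_top A)
end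

section
/- Let B be a unital associative algebra over a field F with char(F) ≠ 2 such that (i) every biderivation of B is inner, and (ii) for every central element α, α·[[B,B],B] = 0 implies α = 0. Let φ : A → B be a Jordan isomorphism (bijective Jordan homomorphism) from an associative algebra A that is nearly-standard, i.e., there exist maps φ₁, φ₂ : A → B with φ = φ₁ + φ₂ and φ(xy) = φ(x)φ₁(y) + φ₂(y)φ(x) for all x, y. Then there exists a central idempotent ε ∈ Z(B) such that x ↦ εφ(x) is a homomorphism and x ↦ (1−ε)φ(x) is an antihomomorphism. -/
theorem nearly_standard_jordan_iso_is_standard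
    (F A B : Type*) [Field F] [Ring A] [Algebra F A] [Ring B] [Algebra F B]
    (hchar : (2 : F) ≠ 0)
    (hbider : ∀ Δ : B → B → B,
      (∀ r r' s : B, Δ (r + r') s = Δ r s + Δ r' s) →
      (∀ r s s' : B, Δ r (s + s') = Δ r s + Δ r s') →
      (∀ r r' s : B, Δ (r * r') s = Δ r s * r' + r * Δ r' s) →
      (∀ r s s' : B, Δ r (s * s') = Δ r s * s' + s * Δ r s') →
      ∃ lam ∈ Set.center B, ∀ r s : B, Δ r s = lam * (r * s - s * r))
    (hcent : ∀ α ∈ Set.center B,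
      (∀ x y z : B, α * (((x * y - y * x) * z - z * (x * y - y * x))) = 0) → α = 0)
    (φ : A →ₗ[F] B) (hbij : Function.Bijective φ)
    (hJ : ∀ x y : A, φ (x * y + y * x) = φ x * φ y + φ y * φ x)
    (φ₁ φ₂ : A → B)
    (hsum : ∀ x : A, φ x = φ₁ x + φ₂ x)
    (hns : ∀ x y : A, φ (x * y) = φ x * φ₁ y + φ₂ y * φ x) :
    ∃ ε ∈ Set.center B, ε * ε = ε ∧
      (∀ x y : A, ε * φ (x * y) = (ε * φ x) * (ε * φ y)) ∧
      (∀ x y : A, (1 - ε) * φ (x * y) = ((1 - ε) * φ y) * ((1 - ε) * φ x)) := by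
  obtain ⟨g, hgl, hgr⟩ := Function.bijective_iff_has_inverse.mp hbij
  -- Key skew-symmetry: [φ₂ y, φ x] = -[φ₂ x, φ y]
  have hskew0 : ∀ x y : A,
      φ₂ y * φ x - φ x * φ₂ y = -(φ₂ x * φ y - φ y * φ₂ x) := by
    intro x y
    have h1 := hns x y
    have h2 := hns y x
    have h3 := hJ x y
    rw [map_add, h1, h2] at h3
    have e1 : φ₁ y = φ y - φ₂ y := eq_sub_of_add_eq (hsum y).symm
    have e2 : φ₁ x = φ x - φ₂ x := eq_sub_of_add_eq (hsum x).symm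
    rw [e1, e2] at h3
    linear_combination (norm := noncomm_ring) h3
  -- The biderivation Δ r s = [φ₂ (g s), r]
  set Δ : B → B → B := fun r s => φ₂ (g s) * r - r * φ₂ (g s) with hΔ
  have hskew : ∀ r s : B, Δ r s = -Δ s r := by
    intro r s
    have := hskew0 (g r) (g s)
    rw [hgr r, hgr s] at this
    simpa [hΔ] using this
  have hadd1 : ∀ r r' s : B, Δ (r + r') s = Δ r s + Δ r' s := by
    intro r r' s; simp only [hΔ]; noncomm_ring
  have hder1 : ∀ r r' s : B, Δ (r * r') s = Δ r s * r' + r * Δ r' s := by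
    intro r r' s; simp only [hΔ]; noncomm_ring
  have hadd2 : ∀ r s s' : B, Δ r (s + s') = Δ r s + Δ r s' := by
    intro r s s'
    rw [hskew r (s + s'), hadd1, hskew s r, hskew s' r]
    abel
  have hder2 : ∀ r s s' : B, Δ r (s * s') = Δ r s * s' + s * Δ r s' := by
    intro r s s'
    rw [hskew r (s * s'), hder1, hskew s r, hskew s' r]
    noncomm_ring
  obtain ⟨lam, hlamc, hlam⟩ := hbider Δ hadd1 hadd2 hder1 hder2
  have hc : ∀ t : B, lam * t = t * lam := fun t =>
    ((Semigroup.mem_center_iff.mp hlamc) t).symm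
  have hswap2 : ∀ u : B, u * lam = lam * u := fun u => (hc u).symm
  have hswap : ∀ u v : B, u * (lam * v) = lam * (u * v) := fun u v => by
    rw [← mul_assoc, hswap2, mul_assoc]
  -- Multiplicativity up to lam: φ(xy) = φx φy + lam [φx, φy]
  have hmul : ∀ x y : A,
      φ (x * y) = φ x * φ y + lam * (φ x * φ y - φ y * φ x) := by
    intro x y
    have h := hlam (φ x) (φ y)
    rw [hΔ] at h
    simp only at h
    rw [hgl y] at h
    have h1 := hns x y
    have e1 : φ₁ y = φ y - φ₂ y := eq_sub_of_add_eq (hsum y).symm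
    rw [e1] at h1
    rw [h1]
    linear_combination (norm := noncomm_ring) h
  -- Associativity forces (lam² + lam)·[[B,B],B] = 0
  have hzero : ∀ x y z : B,
      (lam * lam + lam) * ((x * y - y * x) * z - z * (x * y - y * x)) = 0 := by
    intro x y z
    obtain ⟨p, hp⟩ := hbij.2 x
    obtain ⟨q, hq⟩ := hbij.2 z
    obtain ⟨r, hr⟩ := hbij.2 y
    have e := congrArg φ (mul_assoc p q r)
    rw [hmul (p * q) r, hmul p q, hmul p (q * r), hmul q r, hp, hq, hr] at e
    linear_combination (norm := (simp only [mul_add, add_mul, mul_sub, sub_mul,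
      mul_assoc, hswap, hswap2]; noncomm_ring)) e
  have hα : lam * lam + lam = 0 :=
    hcent _ (Set.add_mem_center (Set.mul_mem_center hlamc hlamc) hlamc) hzero
  -- The central idempotent
  refine ⟨1 + lam, Set.add_mem_center (Set.one_mem_center) hlamc, ?_, ?_, ?_⟩
  · linear_combination (norm := noncomm_ring) hα
  · intro x y
    rw [hmul x y]
    linear_combination (norm := (simp only [mul_add, add_mul, mul_sub, sub_mul,
      mul_assoc, hswap, hswap2]; noncomm_ring)) (hα * (-(φ y * φ x)))
  · intro x y
    rw [hmul x y]
    linear_combination (norm := (simp only [mul_add, add_mul, mul_sub, sub_mul,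
      mul_assoc, hswap, hswap2]; noncomm_ring)) (hα * (-(φ x * φ y)))
end

section
/- Suppose φ : A → B is a nearly-standard Jordan homomorphism via an element ε (i.e., φ(xy) = εφ(x)φ(y) + (1−ε)φ(y)φ(x) for all x, y, with ε central in B). Then ε(1−ε)·[[φ(x), φ(z)], φ(y)] = 0 for all x, y, z ∈ A. -/
theorem epsilon_one_sub_epsilon_annihilates
    (F A B : Type*) [Field F] [Ring A] [Algebra F A] [Ring B] [Algebra F B]
    (hchar : (2 : F) ≠ 0)
    (ε : B) (hε : ε ∈ Set.center B)
    (φ : A →ₗ[F] B)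
    (hφ : ∀ x y : A, φ (x * y) = ε * (φ x * φ y) + (1 - ε) * (φ y * φ x)) :
    ∀ x y z : A,
      ε * (1 - ε) *
        ((φ x * φ z - φ z * φ x) * φ y - φ y * (φ x * φ z - φ z * φ x)) = 0 := by
  intro x y z
  have hu : ∀ t : B, ε * t = t * ε := fun t => ((Set.mem_center_iff.mp hε).comm t)
  have hu' : ∀ s t : B, s * (ε * t) = ε * (s * t) := by
    intro s t; rw [← mul_assoc, ← hu, mul_assoc]
  have key : ε * (φ x * (ε * (φ y * φ z) + (1 - ε) * (φ z * φ y))) +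
      (1 - ε) * ((ε * (φ y * φ z) + (1 - ε) * (φ z * φ y)) * φ x)
      = ε * ((ε * (φ x * φ y) + (1 - ε) * (φ y * φ x)) * φ z) +
        (1 - ε) * (φ z * (ε * (φ x * φ y) + (1 - ε) * (φ y * φ x))) := by
    rw [← hφ y z, ← hφ x y, ← hφ x (y * z), ← hφ (x * y) z, mul_assoc]
  have expand : ε * (1 - ε) *
      ((φ x * φ z - φ z * φ x) * φ y - φ y * (φ x * φ z - φ z * φ x)) =
      (ε * (φ x * (ε * (φ y * φ z) + (1 - ε) * (φ z * φ y))) +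
        (1 - ε) * ((ε * (φ y * φ z) + (1 - ε) * (φ z * φ y)) * φ x)) -
      (ε * ((ε * (φ x * φ y) + (1 - ε) * (φ y * φ x)) * φ z) +
        (1 - ε) * (φ z * (ε * (φ x * φ y) + (1 - ε) * (φ y * φ x)))) := by
    simp only [mul_add, add_mul, mul_sub, sub_mul, mul_assoc, hu', one_mul]
    abel
  rw [expand, key, sub_self]
end

section
/- Let A be a unital associative algebra over a field F, let d and g be derivations of A, let J be a two-sided ideal of A and π : A → A/J the natural projection. Then the F-vector space B = A × (A/J) with multiplication (x,u)⋆(y,v) = (xy, π(d(x)g(y)) + π(x)v + uπ(y)) is an associative algebra. -/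
theorem annihilator_extension_assoc
    (F A C : Type*) [Field F] [Ring A] [Algebra F A] [Ring C] [Algebra F C]
    (d g : A →ₗ[F] A)
    (hd : ∀ x y : A, d (x * y) = d x * y + x * d y)
    (hg : ∀ x y : A, g (x * y) = g x * y + x * g y)
    (π : A →ₐ[F] C) (hπ : Function.Surjective π)
    (mul : A × C → A × C → A × C)
    (hmul : ∀ p q : A × C,
      mul p q = (p.1 * q.1, π (d p.1 * g q.1) + π p.1 * q.2 + p.2 * π q.1)) :
    ∀ p q r : A × C, mul (mul p q) r = mul p (mul q r) := by
  intro p q r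
  simp only [hmul, hd, hg, map_mul, map_add, Prod.mk.injEq, mul_assoc]
  constructor
  · trivial
  · noncomm_ring
end

section
/- Let A be a unital associative algebra over a field F with char(F) ≠ 2, d and g derivations of A, J a two-sided ideal with [g(x), d(x)] ∈ J for all x ∈ A, and let B = A × (A/J) be the algebra with product (x,u)⋆(y,v) = (xy, π(d(x)g(y)) + π(x)v + uπ(y)). Then the map φ : A → B given by φ(x) = (x, ½π((d∘g)(x))) is a Jordan homomorphism. -/
/-!
Polarizing `π [g x, d x] = 0` gives `π (g x d y + g y d x) = π (d x g y + d y g x)`.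
Expanding `(d ∘ g) (x y + y x)` by the Leibniz rule, the cross terms `g x d y + d x g y + g y d x
+ d y g x` are thus congruent modulo `ker π` to twice the terms `d x g y + d y g x` that the twisted
product contributes, so halving gives the Jordan identity in the second coordinate.
-/

section

variable {A : Type*} [Ring A] {D : Type*} [FunLike D A A] [AddMonoidHomClass D A A]

theorem map_mul_add_mul_swap_eq_of_map_commutator_eq_zero {C E : Type*} [AddCommGroup C]
    [FunLike E A C] [AddMonoidHomClass E A C] (d g : D) (f : E)
    (h : ∀ x, f (g x * d x - d x * g x) = 0) (x y : A) :
    f (g x * d y + g y * d x) = f (d x * g y + d y * g x) := by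
  rw [← sub_eq_zero, ← map_sub]
  have hpol : g x * d y + g y * d x - (d x * g y + d y * g x) =
      (g (x + y) * d (x + y) - d (x + y) * g (x + y)) - (g x * d x - d x * g x)
        - (g y * d y - d y * g y) := by
    simp only [map_add]; noncomm_ring
  rw [hpol, map_sub, map_sub, h, h, h, sub_zero, sub_zero]

theorem map_map_mul_of_leibniz (d : D) (g : A → A)
    (hd : ∀ x y, d (x * y) = d x * y + x * d y) (hg : ∀ x y, g (x * y) = g x * y + x * g y)
    (x y : A) :
    d (g (x * y)) = d (g x) * y + g x * d y + (d x * g y + x * d (g y)) := by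
  rw [hg, map_add, hd, hd]

end

theorem annihilator_extension_jordan_hom_general
    (F A C : Type*) [Field F] [Ring A] [Algebra F A] [Ring C] [Algebra F C]
    (hchar : (2 : F) ≠ 0)
    (d g : A →ₗ[F] A)
    (hd : ∀ x y : A, d (x * y) = d x * y + x * d y)
    (hg : ∀ x y : A, g (x * y) = g x * y + x * g y)
    (π : A →ₐ[F] C)
    (hJid : ∀ x : A, π (g x * d x - d x * g x) = 0)
    (mul : A × C → A × C → A × C)
    (hmul : ∀ p q : A × C,
      mul p q = (p.1 * q.1, π (d p.1 * g q.1) + π p.1 * q.2 + p.2 * π q.1))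
    (φ : A → A × C)
    (hφ : ∀ x : A, φ x = (x, (2 : F)⁻¹ • π (d (g x)))) :
    ∀ x y : A, φ (x * y + y * x) = mul (φ x) (φ y) + mul (φ y) (φ x) := by
  intro x y
  have hswap := map_mul_add_mul_swap_eq_of_map_commutator_eq_zero d g π hJid x y
  simp only [hφ, hmul, Prod.mk_add_mk, Prod.mk.injEq, true_and]
  rw [map_add, map_add, map_map_mul_of_leibniz d g hd hg, map_map_mul_of_leibniz d g hd hg]
  simp only [map_add, map_mul] at hswap ⊢
  apply smul_right_injective C hchar
  simp only [smul_add, mul_smul_comm, smul_mul_assoc, smul_inv_smul₀ hchar]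
  linear_combination (norm := module) hswap

theorem annihilator_extension_jordan_hom
    (F A C : Type*) [Field F] [Ring A] [Algebra F A] [Ring C] [Algebra F C]
    (hchar : (2 : F) ≠ 0)
    (d g : A →ₗ[F] A)
    (hd : ∀ x y : A, d (x * y) = d x * y + x * d y)
    (hg : ∀ x y : A, g (x * y) = g x * y + x * g y)
    (π : A →ₐ[F] C) (hπ : Function.Surjective π)
    (hJid : ∀ x : A, π (g x * d x - d x * g x) = 0)
    (mul : A × C → A × C → A × C)
    (hmul : ∀ p q : A × C,
      mul p q = (p.1 * q.1, π (d p.1 * g q.1) + π p.1 * q.2 + p.2 * π q.1))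
    (φ : A → A × C)
    (hφ : ∀ x : A, φ x = (x, (2 : F)⁻¹ • π (d (g x)))) :
    ∀ x y : A, φ (x * y + y * x) = mul (φ x) (φ y) + mul (φ y) (φ x) :=
  annihilator_extension_jordan_hom_general F A C hchar d g hd hg π hJid mul hmul φ hφ
end

section
/- Let A be an associative algebra over a field with char ≠ 2 in which [[A,A],A] = 0. Then [a,x][b,x] = 0 for all a, b, x ∈ A. Consequently, any two inner derivations d(x) = [e₁,x] and g(x) = [e₂,x] satisfy d(x)g(x) = g(x)d(x) = 0 for all x. -/
theorem commutator_product_zero_of_double_commutators_zero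
    (F A : Type*) [Field F] [Ring A] [Algebra F A] (hchar : (2 : F) ≠ 0)
    (hdc : ∀ u v w : A, (u * v - v * u) * w - w * (u * v - v * u) = 0) :
    (∀ a b x : A, (a * x - x * a) * (b * x - x * b) = 0) ∧
    (∀ e₁ e₂ x : A,
      (e₁ * x - x * e₁) * (e₂ * x - x * e₂) = 0 ∧
      (e₂ * x - x * e₂) * (e₁ * x - x * e₁) = 0) := by
  have key : ∀ a b x : A, (a * x - x * a) * (b * x - x * b) = 0 := by
    intro a b x
    have h3 : ((a*x)*x - x*(a*x)) * b = b * ((a*x)*x - x*(a*x)) :=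
      sub_eq_zero.mp (hdc (a*x) x b)
    have h4 : (a*x - x*a) * b = b * (a*x - x*a) := sub_eq_zero.mp (hdc a x b)
    have h5 : (a*x - x*a) * (x*b) = (a*x - x*a) * (b*x) := by
      calc (a*x-x*a)*(x*b) = ((a*x)*x - x*(a*x))*b := by noncomm_ring
        _ = b*((a*x)*x - x*(a*x)) := h3
        _ = (b*(a*x-x*a))*x := by noncomm_ring
        _ = ((a*x-x*a)*b)*x := by rw [← h4]
        _ = (a*x-x*a)*(b*x) := by noncomm_ring
    rw [mul_sub, h5, sub_self]
  exact ⟨key, fun e₁ e₂ x => ⟨key e₁ e₂ x, key e₂ e₁ x⟩⟩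
end

section
/- Let A be an associative algebra (with product denoted by juxtaposition), J a Jordan subalgebra of A^(+) (a linear subspace closed under x∘y = xy + yx), I an ideal of the Jordan algebra J, and I³ = (I∘I)∘I the cube of I in J. Then J·I³ ⊆ I·I and I³·J ⊆ I·I, where the products on the right are associative products of subspaces in A. -/
theorem jordan_cube_lemma
    (F A : Type*) [Field F] [Ring A] [Algebra F A] (hchar : (2 : F) ≠ 0)
    (J : Submodule F A) (hJ : ∀ x ∈ J, ∀ y ∈ J, x * y + y * x ∈ J)
    (I : Submodule F A) (hIJ : I ≤ J)
    (hIdeal : ∀ a ∈ J, ∀ u ∈ I, a * u + u * a ∈ I)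
    (Icube : Submodule F A)
    (hIcube : Icube = Submodule.span F
      {x : A | ∃ u ∈ I, ∃ v ∈ I, ∃ w ∈ I,
        x = (u * v + v * u) * w + w * (u * v + v * u)}) :
    (∀ a ∈ J, ∀ c ∈ Icube, a * c ∈ I * I) ∧
    (∀ a ∈ J, ∀ c ∈ Icube, c * a ∈ I * I) := by
  -- auxiliary triple-product lemma
  have tripleAux : ∀ x y u : A,
      ((x * u + u * x) * y + y * (x * u + u * x)) ∈ I →
      ((u * y + y * u) * x + x * (u * y + y * u)) ∈ I →
      ((x * y + y * x) * u + u * (x * y + y * x)) ∈ I →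
      x * u * y + y * u * x ∈ I := by
    intro x y u h1 h2 h3
    have hs : ((x * u + u * x) * y + y * (x * u + u * x))
        + ((u * y + y * u) * x + x * (u * y + y * u))
        - ((x * y + y * x) * u + u * (x * y + y * x)) ∈ I :=
      I.sub_mem (I.add_mem h1 h2) h3
    have h2s : ((x * u + u * x) * y + y * (x * u + u * x))
        + ((u * y + y * u) * x + x * (u * y + y * u))
        - ((x * y + y * x) * u + u * (x * y + y * x))
        = (2 : F) • (x * u * y + y * u * x) := by
      rw [two_smul]; noncomm_ring
    have := I.smul_mem (2 : F)⁻¹ hs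
    rwa [h2s, inv_smul_smul₀ hchar] at this
  -- triple product with outer elements in J, middle in I
  have Tmem : ∀ x ∈ J, ∀ y ∈ J, ∀ u ∈ I, x * u * y + y * u * x ∈ I := by
    intro x hx y hy u hu
    refine tripleAux x y u ?_ ?_ ?_
    · have h1 : x * u + u * x ∈ I := hIdeal x hx u hu
      have := hIdeal y hy _ h1
      rwa [add_comm] at this
    · have h1 : u * y + y * u ∈ I := by
        have := hIdeal y hy u hu; rwa [add_comm] at this
      have := hIdeal x hx _ h1
      rwa [add_comm] at this
    · exact hIdeal (x * y + y * x) (hJ x hx y hy) u hu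
  -- triple product with outer elements in I, middle in J
  have Tmem2 : ∀ u ∈ I, ∀ v ∈ I, ∀ a ∈ J, u * a * v + v * a * u ∈ I := by
    intro u hu v hv a ha
    refine tripleAux u v a ?_ ?_ ?_
    · have h1 : u * a + a * u ∈ I := by
        have := hIdeal a ha u hu; rwa [add_comm] at this
      have := hIdeal v (hIJ hv) _ h1
      rwa [add_comm] at this
    · have h1 : a * v + v * a ∈ I := hIdeal a ha v hv
      have := hIdeal u (hIJ hu) _ h1
      rwa [add_comm] at this
    · have h1 : u * v + v * u ∈ I := hIdeal u (hIJ hu) v hv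
      have := hIdeal a ha _ h1
      rwa [add_comm] at this
  subst hIcube
  have main : ∀ a ∈ J, ∀ c ∈ Submodule.span F
      {x : A | ∃ u ∈ I, ∃ v ∈ I, ∃ w ∈ I,
        x = (u * v + v * u) * w + w * (u * v + v * u)},
      a * c ∈ I * I ∧ c * a ∈ I * I := by
    intro a ha c hc
    induction hc using Submodule.span_induction with
    | mem x hx =>
      obtain ⟨u, hu, v, hv, w, hw, rfl⟩ := hx
      constructor
      · have key : a * ((u * v + v * u) * w + w * (u * v + v * u)) =
            ((a * u * v + v * u * a) * w + (a * w * v + v * w * a) * u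
              - v * (u * a * w + w * a * u))
            + ((a * v * u + u * v * a) * w + (a * w * u + u * w * a) * v
              - u * (v * a * w + w * a * v)) := by noncomm_ring
        rw [key]
        refine Submodule.add_mem _ (Submodule.sub_mem _ (Submodule.add_mem _ ?_ ?_) ?_)
          (Submodule.sub_mem _ (Submodule.add_mem _ ?_ ?_) ?_)
        · exact Submodule.mul_mem_mul (Tmem a ha v (hIJ hv) u hu) hw
        · exact Submodule.mul_mem_mul (Tmem a ha v (hIJ hv) w hw) hu
        · exact Submodule.mul_mem_mul hv (Tmem2 u hu w hw a ha)
        · exact Submodule.mul_mem_mul (Tmem a ha u (hIJ hu) v hv) hw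
        · exact Submodule.mul_mem_mul (Tmem a ha u (hIJ hu) w hw) hv
        · exact Submodule.mul_mem_mul hu (Tmem2 v hv w hw a ha)
      · have key : ((u * v + v * u) * w + w * (u * v + v * u)) * a =
            (u * (v * w * a + a * w * v) + w * (v * u * a + a * u * v)
              - (u * a * w + w * a * u) * v)
            + (v * (u * w * a + a * w * u) + w * (u * v * a + a * v * u)
              - (v * a * w + w * a * v) * u) := by noncomm_ring
        rw [key]
        refine Submodule.add_mem _ (Submodule.sub_mem _ (Submodule.add_mem _ ?_ ?_) ?_)
          (Submodule.sub_mem _ (Submodule.add_mem _ ?_ ?_) ?_)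
        · exact Submodule.mul_mem_mul hu (Tmem v (hIJ hv) a ha w hw)
        · exact Submodule.mul_mem_mul hw (Tmem v (hIJ hv) a ha u hu)
        · exact Submodule.mul_mem_mul (Tmem2 u hu w hw a ha) hv
        · exact Submodule.mul_mem_mul hv (Tmem u (hIJ hu) a ha w hw)
        · exact Submodule.mul_mem_mul hw (Tmem u (hIJ hu) a ha v hv)
        · exact Submodule.mul_mem_mul (Tmem2 v hv w hw a ha) hu
    | zero => simp
    | add x y hx hy ihx ihy =>
      exact ⟨by rw [mul_add]; exact Submodule.add_mem _ ihx.1 ihy.1,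
             by rw [add_mul]; exact Submodule.add_mem _ ihx.2 ihy.2⟩
    | smul r x hx ih =>
      exact ⟨by rw [mul_smul_comm]; exact Submodule.smul_mem _ _ ih.1,
             by rw [smul_mul_assoc]; exact Submodule.smul_mem _ _ ih.2⟩
  exact ⟨fun a ha c hc => (main a ha c hc).1, fun a ha c hc => (main a ha c hc).2⟩
end

section
/- Let A be an associative algebra over F, f : A × A → F a bilinear 2-cocycle, and extend f to Ã = A ⊕ A^op by f(A, A^op) = f(A^op, A) = 0 and f(x^op, y^op) = −f(y, x). Let B = A ⊕ A^op ⊕ Fz be the corresponding annihilator extension. Then the map * : B → B, a + b^op + kz ↦ b + a^op − kz, is an involution of B (a linear anti-automorphism of order 2). -/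
theorem annihilator_extension_involution
    (F A : Type*) [Field F] [Ring A] [Algebra F A]
    (f : A →ₗ[F] A →ₗ[F] F)
    (hf : ∀ a b c : A, f (a * b) c = f a (b * c))
    (mul : A × A × F → A × A × F → A × A × F)
    (hmul : ∀ u v : A × A × F,
      mul u v = (u.1 * v.1, v.2.1 * u.2.1, f u.1 v.1 - f v.2.1 u.2.1))
    (star : A × A × F → A × A × F)
    (hstar : ∀ u : A × A × F, star u = (u.2.1, u.1, -u.2.2)) :
    (∀ u v : A × A × F, star (mul u v) = mul (star v) (star u)) ∧
    (∀ u : A × A × F, star (star u) = u) ∧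
    (∀ u v : A × A × F, star (u + v) = star u + star v) ∧
    (∀ (k : F) (u : A × A × F), star (k • u) = k • star u) := by
  refine ⟨fun u v => ?_, fun u => ?_, fun u v => ?_, fun k u => ?_⟩ <;>
    simp [hmul, hstar, Prod.ext_iff, Prod.smul_def, smul_eq_mul, mul_comm] <;> ring
end
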